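/- arXiv:1607.03610 — 6 statements merged into one kernel-verified Lean document; each statement's English description precedes it below -/
import Mathlib

section
/- Let f be a continuous complex-valued function on [a,b] and h: [0,∞) → [0,∞) be a nondecreasing function such that |f(x) − f(y)| ≤ h(|x − y|) for all x, y ∈ [a,b]. Then for every nonzero real λ, |∫_a^b f(x) e^{iλx} dx| ≤ 3(b − a) h(1/|λ|) + (2/|λ|) sup_{x ∈ [a,b]} |f(x)|. -/
/-!
Cut `[a, b]` into `n + 1` equal pieces of length `s ≤ 1/|λ|` with `n ≤ (b - a)|λ|`. Replacing `f`
by its value at the left endpoint of each piece costs at most `(b - a) h(1/|λ|)`, and the step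
function integrates to `(iλ)⁻¹ ∑ f(xᵢ)(e^{iλxᵢ₊₁} - e^{iλxᵢ})`. Summation by parts turns this sum
into a boundary term of size `2 sup |f|` plus `n` terms `(f(xᵢ₊₁) - f(xᵢ))(e^{iλxᵢ₊₁} - e^{iλx₀})`,
each of size at most `2 h(1/|λ|)`; dividing by `|λ|` gives the remaining `2(b - a) h(1/|λ|)`.
-/

open MeasureTheory Set Complex

lemma norm_sum_mul_sub_le_of_norm_le_one {R : Type*} [NormedRing R] {c E : ℕ → R} {n : ℕ}
    {M ε : ℝ} (hE : ∀ j, ‖E j‖ ≤ 1) (hc : ‖c n‖ ≤ M)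
    (hdiff : ∀ i < n, ‖c (i + 1) - c i‖ ≤ ε) :
    ‖∑ i ∈ Finset.range (n + 1), c i * (E (i + 1) - E i)‖ ≤ 2 * (M + n * ε) := by
  have hE2 : ∀ j, ‖E j - E 0‖ ≤ 2 := fun j =>
    (norm_sub_le _ _).trans (by linarith [hE j, hE 0])
  have abel := Finset.sum_range_by_parts c (fun i => E (i + 1) - E i) (n + 1)
  simp only [smul_eq_mul, Finset.sum_range_sub, add_tsub_cancel_right] at abel
  rw [abel]
  calc _ ≤ ‖c n * (E (n + 1) - E 0)‖
        + ∑ i ∈ Finset.range n, ‖(c (i + 1) - c i) * (E (i + 1) - E 0)‖ :=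
        (norm_sub_le _ _).trans (add_le_add_right (norm_sum_le _ _) _)
    _ ≤ M * 2 + ∑ i ∈ Finset.range n, ε * 2 := by
        gcongr with i hi
        · exact norm_mul_le_of_le hc (hE2 _)
        · exact norm_mul_le_of_le (hdiff i (Finset.mem_range.mp hi)) (hE2 _)
    _ = 2 * (M + n * ε) := by rw [Finset.sum_const, Finset.card_range, nsmul_eq_mul]; ring

lemma norm_exp_I_mul_ofReal_mul (l y : ℝ) : ‖exp (I * l * y)‖ = 1 := by
  simp [norm_exp]

lemma norm_integral_mul_exp_sub_le {f : ℝ → ℂ} {u v l ε : ℝ} (hl : l ≠ 0) (huv : u ≤ v)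
    (hf : ContinuousOn f (Icc u v)) (hε : ∀ y ∈ Icc u v, ‖f y - f u‖ ≤ ε) :
    ‖(∫ y in u..v, f y * exp (I * l * y))
        - f u * ((exp (I * l * v) - exp (I * l * u)) / (I * l))‖ ≤ ε * (v - u) := by
  have hIl : I * l ≠ 0 := mul_ne_zero I_ne_zero (ofReal_ne_zero.mpr hl)
  have hexp : Continuous fun y : ℝ => exp (I * l * y) := by fun_prop
  rw [← integral_exp_mul_complex hIl, ← intervalIntegral.integral_const_mul,
    ← intervalIntegral.integral_sub, ← abs_of_nonneg (sub_nonneg.mpr huv)]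
  · refine intervalIntegral.norm_integral_le_of_norm_le_const fun y hy => ?_
    rw [uIoc_of_le huv] at hy
    rw [← sub_mul, norm_mul, norm_exp_I_mul_ofReal_mul, mul_one]
    exact hε y (Ioc_subset_Icc_self hy)
  · exact (hf.mul hexp.continuousOn).intervalIntegrable_of_Icc huv
  · exact (hexp.intervalIntegrable _ _).const_mul _

lemma norm_integral_mul_exp_le_of_partition {f : ℝ → ℂ} {x : ℕ → ℝ} {n : ℕ} {l ε M : ℝ}
    (hl : l ≠ 0) (hx : ∀ i ≤ n, x i ≤ x (i + 1))
    (hf : ∀ i ≤ n, ContinuousOn f (Icc (x i) (x (i + 1))))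
    (hε : ∀ i ≤ n, ∀ y ∈ Icc (x i) (x (i + 1)), ‖f y - f (x i)‖ ≤ ε) (hM : ‖f (x n)‖ ≤ M) :
    ‖∫ y in x 0..x (n + 1), f y * exp (I * l * y)‖
      ≤ ε * (x (n + 1) - x 0) + 2 * (M + n * ε) / |l| := by
  set S := ∑ i ∈ Finset.range (n + 1), f (x i) * (exp (I * l * x (i + 1)) - exp (I * l * x i))
  have hpieces : ‖(∫ y in x 0..x (n + 1), f y * exp (I * l * y)) - S / (I * l)‖
      ≤ ε * (x (n + 1) - x 0) := by
    have hint : ∀ i < n + 1, IntervalIntegrable (fun y : ℝ => f y * exp (I * l * y))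
        volume (x i) (x (i + 1)) := fun i hi =>
      ((hf i (Nat.lt_succ_iff.mp hi)).mul (by fun_prop)).intervalIntegrable_of_Icc
        (hx i (Nat.lt_succ_iff.mp hi))
    rw [← intervalIntegral.sum_integral_adjacent_intervals hint, Finset.sum_div,
      ← Finset.sum_sub_distrib]
    calc _ ≤ ∑ i ∈ Finset.range (n + 1), ε * (x (i + 1) - x i) := by
          refine (norm_sum_le _ _).trans (Finset.sum_le_sum fun i hi => ?_)
          have hi : i ≤ n := Nat.lt_succ_iff.mp (Finset.mem_range.mp hi)
          rw [mul_div_assoc]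
          exact norm_integral_mul_exp_sub_le hl (hx i hi) (hf i hi) (hε i hi)
      _ = ε * (x (n + 1) - x 0) := by rw [← Finset.mul_sum, Finset.sum_range_sub]
  have hS : ‖S‖ ≤ 2 * (M + n * ε) :=
    norm_sum_mul_sub_le_of_norm_le_one (fun j => (norm_exp_I_mul_ofReal_mul _ _).le) hM
      fun i hi => hε i hi.le _ ⟨hx i hi.le, le_rfl⟩
  have hSdiv : ‖S / (I * l)‖ = ‖S‖ / |l| := by
    rw [norm_div, norm_mul, norm_I, one_mul, norm_real, Real.norm_eq_abs]
  have htriangle :=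
    norm_sub_norm_le (∫ y in x 0..x (n + 1), f y * exp (I * l * y)) (S / (I * l))
  have hSl : ‖S‖ / |l| ≤ 2 * (M + n * ε) / |l| := by gcongr
  linarith

lemma exists_nat_mul_le_and_div_succ_le {t δ : ℝ} (ht : 0 ≤ t) (hδ : 0 < δ) :
    ∃ n : ℕ, n * δ ≤ t ∧ t / (n + 1) ≤ δ := by
  refine ⟨⌊t / δ⌋₊, ?_, ?_⟩
  · exact (le_div_iff₀ hδ).mp (Nat.floor_le (div_nonneg ht hδ.le))
  · rw [div_le_iff₀ (by positivity), mul_comm]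
    exact (div_lt_iff₀ hδ).mp (Nat.lt_floor_add_one _) |>.le

lemma norm_integral_mul_exp_le_of_oscillation {f : ℝ → ℂ} {a b l ε M : ℝ} (hab : a ≤ b)
    (hl : l ≠ 0) (hf : ContinuousOn f (Icc a b))
    (hε : ∀ x ∈ Icc a b, ∀ y ∈ Icc a b, |x - y| ≤ |l|⁻¹ → ‖f x - f y‖ ≤ ε)
    (hM : ∀ x ∈ Icc a b, ‖f x‖ ≤ M) :
    ‖∫ x in a..b, f x * exp (I * l * x)‖ ≤ 3 * (b - a) * ε + 2 * |l|⁻¹ * M := by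
  have hδ : 0 < |l|⁻¹ := inv_pos.mpr (abs_pos.mpr hl)
  obtain ⟨n, hnδ, hsδ⟩ := exists_nat_mul_le_and_div_succ_le (sub_nonneg.mpr hab) hδ
  set s := (b - a) / (n + 1)
  have hs : 0 ≤ s := div_nonneg (sub_nonneg.mpr hab) (by positivity)
  set x : ℕ → ℝ := fun j => a + j * s
  have hxn : x (n + 1) = b := by simp only [x, s]; push_cast; field_simp; ring
  have hstep : ∀ i, x (i + 1) = x i + s := fun i => by simp only [x]; push_cast; ring
  have hpiece : ∀ i ≤ n, Icc (x i) (x (i + 1)) ⊆ Icc a b := fun i hi => by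
    refine Icc_subset_Icc ?_ (hxn ▸ ?_)
    · exact le_add_of_nonneg_right (by positivity)
    · simp only [x]; gcongr
  have hxi : ∀ i ≤ n, x i ∈ Icc a b := fun i hi => hpiece i hi ⟨le_rfl, by linarith [hstep i]⟩
  have hosc : ∀ i ≤ n, ∀ y ∈ Icc (x i) (x (i + 1)), ‖f y - f (x i)‖ ≤ ε := by
    intro i hi y hy
    refine hε y (hpiece i hi hy) (x i) (hxi i hi) ?_
    rw [abs_of_nonneg (by linarith [hy.1])]
    linarith [hy.2, hstep i]
  have hε0 : 0 ≤ ε :=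
    (norm_nonneg _).trans (hosc 0 n.zero_le (x 0) ⟨le_rfl, by linarith [hstep 0]⟩)
  have key := norm_integral_mul_exp_le_of_partition hl (fun i _ => by linarith [hstep i])
    (fun i hi => hf.mono (hpiece i hi)) hosc (hM _ (hxi n le_rfl))
  simp only [hxn, x, CharP.cast_eq_zero, zero_mul, add_zero] at key
  calc _ ≤ ε * (b - a) + 2 * (M + n * ε) / |l| := key
    _ ≤ 3 * (b - a) * ε + 2 * |l|⁻¹ * M := by
      rw [div_eq_mul_inv]
      nlinarith [mul_le_mul_of_nonneg_right hnδ hε0]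

theorem fourier_decay_modulus_of_continuity_general
    (a b : ℝ) (hab : a < b) (f : ℝ → ℂ) (hf : ContinuousOn f (Icc a b))
    (h : ℝ → ℝ) (hmono : MonotoneOn h (Ici 0))
    (hmod : ∀ x ∈ Icc a b, ∀ y ∈ Icc a b, ‖f x - f y‖ ≤ h |x - y|)
    (l : ℝ) (hl : l ≠ 0) :
    ‖∫ x in a..b, f x * Complex.exp (Complex.I * l * x)‖ ≤
      3 * (b - a) * h |l|⁻¹ + 2 * |l|⁻¹ * sSup ((fun x => ‖f x‖) '' Icc a b) := by
  refine norm_integral_mul_exp_le_of_oscillation hab.le hl hf (fun x hx y hy hxy => ?_)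
    fun x hx => ?_
  · exact (hmod x hx y hy).trans
      (hmono (mem_Ici.mpr (abs_nonneg _)) (mem_Ici.mpr (hxy.trans' (abs_nonneg _))) hxy)
  · exact le_csSup (isCompact_Icc.image_of_continuousOn hf.norm).bddAbove ⟨x, hx, rfl⟩

/-- Rate of convergence in the Riemann–Lebesgue lemma for a continuous function
with modulus of continuity `h`. -/
theorem fourier_decay_modulus_of_continuity
    (a b : ℝ) (hab : a < b) (f : ℝ → ℂ) (hf : ContinuousOn f (Icc a b))
    (h : ℝ → ℝ) (hmono : MonotoneOn h (Ici 0)) (hnonneg : ∀ x, 0 ≤ x → 0 ≤ h x)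
    (hmod : ∀ x ∈ Icc a b, ∀ y ∈ Icc a b, ‖f x - f y‖ ≤ h |x - y|)
    (l : ℝ) (hl : l ≠ 0) :
    ‖∫ x in a..b, f x * Complex.exp (Complex.I * l * x)‖ ≤
      3 * (b - a) * h |l|⁻¹ + 2 * |l|⁻¹ * sSup ((fun x => ‖f x‖) '' Icc a b) :=
  fourier_decay_modulus_of_continuity_general a b hab f hf h hmono hmod l hl
end

section
/- Let f: [a,b] → ℂ be bounded by M and Hölder continuous of order γ ∈ (0,1] with constant L, i.e. |f(x) − f(y)| ≤ L|x − y|^γ for all x, y ∈ [a,b]. Then for every real λ with |λ| ≥ (b − a)^{−1}, |∫_a^b f(x) e^{iλx} dx| ≤ (3(b − a)L + 2M(b − a)^{1−γ}) |λ|^{−γ}. -/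
/-!
Cut `[a, b]` into `N = ⌈(b - a)|λ|⌉` cells of length `δ ≤ |λ|⁻¹` and freeze `f` at the left
endpoint `p_j` of each cell. Freezing costs at most `L δ^γ` pointwise, hence `(b - a) L δ^γ` in
total. The frozen part integrates exactly to `∑ f(p_j) (e(p_{j+1}) - e(p_j)) / (iλ)` with
`e(t) = e^{iλt}`; summation by parts turns this sum into one over the increments
`f(p_{j+1}) - f(p_j)`, each at most `L δ^γ`, plus two boundary terms at most `M` each, because
`|e| = 1`. Since `N ≤ 2(b - a)|λ|`, `δ^γ ≤ |λ|^{-γ}` and `|λ|⁻¹ ≤ (b - a)^{1-γ} |λ|^{-γ}`,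
the constants follow.
-/

open MeasureTheory Set Finset
open Complex
open scoped NNReal

theorem HolderOnWith.of_dist_le {X Y : Type*} [PseudoMetricSpace X] [PseudoMetricSpace Y]
    {f : X → Y} {s : Set X} {C r : ℝ≥0}
    (h : ∀ x ∈ s, ∀ y ∈ s, dist (f x) (f y) ≤ C * dist x y ^ (r : ℝ)) :
    HolderOnWith C r f s := by
  intro x hx y hy
  rw [edist_dist, edist_dist, ENNReal.ofReal_rpow_of_nonneg dist_nonneg r.coe_nonneg,
    ← ENNReal.ofReal_coe_nnreal, ← ENNReal.ofReal_mul C.coe_nonneg]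
  exact ENNReal.ofReal_le_ofReal (h x hx y hy)

theorem norm_cexp_I_mul_mul (l t : ℝ) : ‖cexp (I * l * t)‖ = 1 := by
  rw [mul_assoc, ← ofReal_mul, norm_exp_I_mul_ofReal]

theorem Finset.sum_range_mul_sub_eq {R : Type*} [Ring R] (c e : ℕ → R) (n : ℕ) :
    ∑ j ∈ range n, c j * (e (j + 1) - e j) =
      c n * e n - c 0 * e 0 - ∑ j ∈ range n, (c (j + 1) - c j) * e (j + 1) := by
  induction n with
  | zero => simp
  | succ n ih =>
    rw [sum_range_succ, ih, sum_range_succ]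
    noncomm_ring

theorem norm_sum_range_mul_sub_le {R : Type*} [SeminormedRing R] {c e : ℕ → R} {n : ℕ}
    {M V : ℝ} (hc : ∀ j ≤ n, ‖c j‖ ≤ M) (hV : ∀ j < n, ‖c (j + 1) - c j‖ ≤ V)
    (he : ∀ j ≤ n, ‖e j‖ ≤ 1) :
    ‖∑ j ∈ range n, c j * (e (j + 1) - e j)‖ ≤ n * V + 2 * M := by
  have hM : 0 ≤ M := (norm_nonneg _).trans (hc 0 n.zero_le)
  have hce : ∀ j ≤ n, ‖c j * e j‖ ≤ M := fun j hj =>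
    (norm_mul_le _ _).trans (by simpa using mul_le_mul (hc j hj) (he j hj) (norm_nonneg _) hM)
  have hsum : ‖∑ j ∈ range n, (c (j + 1) - c j) * e (j + 1)‖ ≤ n * V := by
    calc ‖∑ j ∈ range n, (c (j + 1) - c j) * e (j + 1)‖
        ≤ ∑ j ∈ range n, ‖(c (j + 1) - c j) * e (j + 1)‖ := norm_sum_le _ _
      _ ≤ ∑ _j ∈ range n, V := by
        refine sum_le_sum fun j hj => (norm_mul_le _ _).trans ?_
        have hj := mem_range.1 hj
        have hV0 : 0 ≤ V := (norm_nonneg _).trans (hV j hj)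
        simpa using mul_le_mul (hV j hj) (he (j + 1) hj) (norm_nonneg _) hV0
      _ = n * V := by simp
  rw [sum_range_mul_sub_eq]
  calc ‖c n * e n - c 0 * e 0 - ∑ j ∈ range n, (c (j + 1) - c j) * e (j + 1)‖
      ≤ ‖c n * e n‖ + ‖c 0 * e 0‖ + ‖∑ j ∈ range n, (c (j + 1) - c j) * e (j + 1)‖ :=
        norm_sub_le_of_le (norm_sub_le _ _) le_rfl
    _ ≤ n * V + 2 * M := by linarith [hce n le_rfl, hce 0 n.zero_le]

theorem norm_integral_mul_cexp_sub_le {f : ℝ → ℂ} {u v l ω : ℝ} (c : ℂ) (huv : u ≤ v)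
    (hl : l ≠ 0) (hf : IntervalIntegrable f volume u v)
    (hω : ∀ t ∈ Icc u v, ‖f t - c‖ ≤ ω) :
    ‖(∫ t in u..v, f t * cexp (I * l * t)) -
        c * (cexp (I * l * v) - cexp (I * l * u)) / (I * l)‖ ≤ ω * (v - u) := by
  have hIl : I * l ≠ 0 := mul_ne_zero I_ne_zero (ofReal_ne_zero.2 hl)
  have hE : Continuous fun t : ℝ => cexp (I * l * t) := by fun_prop
  rw [mul_div_assoc, ← integral_exp_mul_complex hIl, ← intervalIntegral.integral_const_mul,
    ← intervalIntegral.integral_sub (hf.mul_continuousOn hE.continuousOn)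
      ((hE.const_mul c).intervalIntegrable _ _), ← abs_of_nonneg (sub_nonneg.2 huv)]
  refine intervalIntegral.norm_integral_le_of_norm_le_const fun t ht => ?_
  rw [← sub_mul, norm_mul, norm_cexp_I_mul_mul]
  simpa using hω t (Ioc_subset_Icc_self (uIoc_of_le huv ▸ ht))

theorem norm_integral_mul_cexp_le_of_oscillation {f : ℝ → ℂ} {a b l M ω : ℝ} {N : ℕ}
    (hab : a ≤ b) (hN : 0 < N) (hl : l ≠ 0) (hf : ContinuousOn f (Icc a b))
    (hM : ∀ x ∈ Icc a b, ‖f x‖ ≤ M)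
    (hω : ∀ x ∈ Icc a b, ∀ y ∈ Icc a b, |x - y| ≤ (b - a) / N → ‖f x - f y‖ ≤ ω) :
    ‖∫ x in a..b, f x * cexp (I * l * x)‖ ≤ (b - a) * ω + (N * ω + 2 * M) / |l| := by
  set δ := (b - a) / N
  set p : ℕ → ℝ := fun j => a + j * δ with hp
  set E : ℝ → ℂ := fun t => cexp (I * l * t)
  have hδ : 0 ≤ δ := div_nonneg (sub_nonneg.2 hab) N.cast_nonneg
  have hNδ : N * δ = b - a := mul_div_cancel₀ _ (Nat.cast_ne_zero.2 hN.ne')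
  have hp_succ : ∀ j, p (j + 1) = p j + δ := fun j => by simp only [hp]; push_cast; ring
  have hp_mem : ∀ j ≤ N, p j ∈ Icc a b := fun j hj =>
    ⟨le_add_of_nonneg_right (by positivity), by
      nlinarith [(Nat.cast_le (α := ℝ)).2 hj]⟩
  have hp_Icc : ∀ j < N, Icc (p j) (p (j + 1)) ⊆ Icc a b := fun j hj =>
    Icc_subset_Icc (hp_mem j hj.le).1 (hp_mem (j + 1) hj).2
  set D : ℕ → ℂ := fun j =>
    (∫ t in p j..p (j + 1), f t * E t) - f (p j) * (E (p (j + 1)) - E (p j)) / (I * l)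
  have hsplit : ∫ x in a..b, f x * E x =
      ∑ j ∈ range N, D j + (∑ j ∈ range N, f (p j) * (E (p (j + 1)) - E (p j))) / (I * l) := by
    have hint : ∀ j < N, IntervalIntegrable (fun t => f t * E t) volume (p j) (p (j + 1)) :=
      fun j hj => ((hf.mono (hp_Icc j hj)).mul (by fun_prop)).intervalIntegrable_of_Icc
        (by linarith [hp_succ j])
    have hp_zero : p 0 = a := by simp [hp]
    have hp_N : p N = b := by simp only [hp]; linarith
    rw [← hp_zero, ← hp_N, ← intervalIntegral.sum_integral_adjacent_intervals hint, sum_div,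
      ← sum_add_distrib]
    exact sum_congr rfl fun j _ => (sub_add_cancel _ _).symm
  have hD_le : ∀ j ∈ range N, ‖D j‖ ≤ ω * δ := by
    intro j hj
    have hj := mem_range.1 hj
    have hle : p j ≤ p (j + 1) := by linarith [hp_succ j]
    refine (norm_integral_mul_cexp_sub_le (f (p j)) hle hl
      ((hf.mono (hp_Icc j hj)).intervalIntegrable_of_Icc hle) fun t ht =>
        hω t (hp_Icc j hj ht) (p j) (hp_mem j hj.le) (by
          rw [abs_of_nonneg (sub_nonneg.2 ht.1)]; linarith [ht.2, hp_succ j])).trans_eq ?_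
    rw [hp_succ, add_sub_cancel_left]
  have habel : ‖∑ j ∈ range N, f (p j) * (E (p (j + 1)) - E (p j))‖ ≤ N * ω + 2 * M :=
    norm_sum_range_mul_sub_le (c := fun j => f (p j)) (e := fun j => E (p j))
      (fun j hj => hM _ (hp_mem j hj))
      (fun j hj => by
        have h := hω _ (hp_mem (j + 1) hj) _ (hp_mem j hj.le)
        rw [hp_succ] at h ⊢
        exact h (by rw [add_sub_cancel_left, abs_of_nonneg hδ]))
      fun j _ => (norm_cexp_I_mul_mul l (p j)).le
  have hIl : ‖I * (l : ℂ)‖ = |l| := by simp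
  calc ‖∫ x in a..b, f x * E x‖
      ≤ ∑ j ∈ range N, ‖D j‖ + ‖∑ j ∈ range N, f (p j) * (E (p (j + 1)) - E (p j))‖ / |l| := by
        rw [hsplit, ← hIl, ← norm_div]
        exact (norm_add_le _ _).trans (add_le_add (norm_sum_le _ _) le_rfl)
    _ ≤ ∑ _j ∈ range N, ω * δ + (N * ω + 2 * M) / |l| := by
        gcongr with j hj
        exact hD_le j hj
    _ = (b - a) * ω + (N * ω + 2 * M) / |l| := by
        rw [sum_const, card_range, nsmul_eq_mul, ← hNδ]
        ring

theorem rpow_div_natCeil_mul_le {x y γ : ℝ} (hx : 0 < x) (hy : 0 < y) (hγ : 0 ≤ γ) :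
    (x / ⌈x * y⌉₊) ^ γ ≤ y ^ (-γ) := by
  have hxy : x / ⌈x * y⌉₊ ≤ y⁻¹ := by
    rw [div_le_iff₀ (by positivity), ← div_eq_inv_mul, le_div_iff₀ hy]
    exact Nat.le_ceil _
  calc (x / ⌈x * y⌉₊) ^ γ ≤ y⁻¹ ^ γ := by gcongr
    _ = y ^ (-γ) := by rw [Real.inv_rpow hy.le, Real.rpow_neg hy.le]

theorem inv_le_rpow_mul_rpow_neg {x y γ : ℝ} (hx : 0 < x) (hxy : x⁻¹ ≤ y) (hγ : γ ≤ 1) :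
    y⁻¹ ≤ x ^ (1 - γ) * y ^ (-γ) := by
  have hy : 0 < y := (inv_pos.2 hx).trans_le hxy
  calc y⁻¹ = y ^ (γ - 1) * y ^ (-γ) := by
        rw [← Real.rpow_add hy, show γ - 1 + -γ = -1 by ring, Real.rpow_neg_one]
    _ ≤ x⁻¹ ^ (γ - 1) * y ^ (-γ) := by
        have := Real.rpow_le_rpow_of_nonpos (inv_pos.2 hx) hxy (by linarith : γ - 1 ≤ 0)
        gcongr
    _ = x ^ (1 - γ) * y ^ (-γ) := by
        rw [Real.inv_rpow hx.le, ← Real.rpow_neg hx.le, neg_sub]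

/-- Rate of convergence in the Riemann–Lebesgue lemma for a bounded
`γ`-Hölder continuous function. -/
theorem fourier_decay_of_holder
    (a b : ℝ) (hab : a < b) (f : ℝ → ℂ) (γ L M : ℝ)
    (hγ : γ ∈ Ioc (0:ℝ) 1) (hL : 0 < L) (hM : 0 < M)
    (hbound : ∀ x ∈ Icc a b, ‖f x‖ ≤ M)
    (hHolder : ∀ x ∈ Icc a b, ∀ y ∈ Icc a b, ‖f x - f y‖ ≤ L * |x - y| ^ γ)
    (l : ℝ) (hl : (b - a)⁻¹ ≤ |l|) :
    ‖∫ x in a..b, f x * Complex.exp (Complex.I * l * x)‖ ≤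
      (3 * (b - a) * L + 2 * M * (b - a) ^ (1 - γ)) * |l| ^ (-γ) := by
  obtain ⟨hγ0, hγ1⟩ := hγ
  have hba : 0 < b - a := sub_pos.2 hab
  have hl0 : 0 < |l| := (inv_pos.2 hba).trans_le hl
  have hN_ge : 1 ≤ (b - a) * |l| := by
    simpa [mul_inv_cancel₀ hba.ne'] using mul_le_mul_of_nonneg_left hl hba.le
  set N := ⌈(b - a) * |l|⌉₊
  have hN : 0 < N := Nat.ceil_pos.2 (by linarith)
  have hN_le : (N : ℝ) ≤ 2 * ((b - a) * |l|) := Nat.ceil_le_two_mul (by linarith)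
  have hcont : ContinuousOn f (Icc a b) :=
    (HolderOnWith.of_dist_le (C := ⟨L, hL.le⟩) (r := ⟨γ, hγ0.le⟩)
      fun x hx y hy => by
        rw [dist_eq_norm, Real.dist_eq]; exact hHolder x hx y hy).continuousOn hγ0
  have hosc : L * ((b - a) / N) ^ γ ≤ L * |l| ^ (-γ) := by
    gcongr
    exact rpow_div_natCeil_mul_le hba hl0 hγ0.le
  refine (norm_integral_mul_cexp_le_of_oscillation (ω := L * ((b - a) / N) ^ γ) hab.le hN
    (abs_pos.1 hl0) hcont hbound fun x hx y hy hxy =>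
      (hHolder x hx y hy).trans (by gcongr)).trans ?_
  calc (b - a) * (L * ((b - a) / N) ^ γ) + (N * (L * ((b - a) / N) ^ γ) + 2 * M) / |l|
      = (b - a) * (L * ((b - a) / N) ^ γ) + N * (L * ((b - a) / N) ^ γ) / |l|
        + 2 * M * |l|⁻¹ := by
        ring
    _ ≤ (b - a) * (L * |l| ^ (-γ)) + 2 * ((b - a) * |l|) * (L * |l| ^ (-γ)) / |l|
        + 2 * M * ((b - a) ^ (1 - γ) * |l| ^ (-γ)) := by
        gcongr
        exact inv_le_rpow_mul_rpow_neg hba hl hγ1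
    _ = (3 * (b - a) * L + 2 * M * (b - a) ^ (1 - γ)) * |l| ^ (-γ) := by
        field_simp
        ring
end

section
/- Let ρ(t,x) = (4πt)^{−1/2} exp(−x²/(4t)), let γ ∈ (0,1], and let σ: [0,∞) × ℝ → ℝ be bounded and jointly Hölder continuous of order γ, i.e. |σ(t₁,x₁) − σ(t₂,x₂)| ≤ L(|t₁ − t₂|^γ + |x₁ − x₂|^γ). Fix t > 0 and x ∈ ℝ and define f(s) = ∫_ℝ ρ(t − s, x − y) σ(s, y) dy for s ∈ [0,t). Then there is a constant C depending only on L, γ, and t such that for all 0 ≤ u < s < t, |f(s) − f(u)| ≤ C (t − u)^{−γ/2} (s − u)^γ. -/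
/-!
Because `∫ ρ(τ, z) dz = 1`, the increment `f(s) - f(u)` splits into
`∫ ρ(t-s, x-y) (σ(s,y) - σ(u,y)) dy`, which is at most `L (s-u)^γ`, and
`∫ (ρ(t-s, x-y) - ρ(t-u, x-y)) (σ(u,y) - σ(u,x)) dy`, which is at most
`L ∫ |ρ(τ₁,z) - ρ(τ₂,z)| |z|^γ dz` with `τ₁ = t-s < τ₂ = t-u`.
Put `r = (τ₂ - τ₁)/τ₂ ∈ [0,1]`. If `r > 1/2`, each kernel alone contributes `O(τ₂^{γ/2})`.
If `r ≤ 1/2`, the mean value theorem in `τ`, with `∂_τ ρ = ρ (z²/(4τ²) - 1/(2τ))`, bounds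
the integral by `O(τ₂^{γ/2} r)`. As `r ≤ r^γ`, both cases give
`O(τ₂^{γ/2} r^γ) = O(τ₂^{-γ/2} (τ₂ - τ₁)^γ)`.
-/

open MeasureTheory Set

/-- The Gaussian heat kernel `ρ(t,x) = (4πt)^{-1/2} exp(-x²/(4t))`. -/
noncomputable def heatKernel (t x : ℝ) : ℝ :=
  (4 * Real.pi * t) ^ (-(1:ℝ)/2) * Real.exp (-(x ^ 2) / (4 * t))

open Real ProbabilityTheory

lemma heatKernel_eq_inv_sqrt {τ : ℝ} (hτ : 0 ≤ τ) (z : ℝ) :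
    heatKernel τ z = (√(4 * π * τ))⁻¹ * exp (-(z ^ 2) / (4 * τ)) := by
  rw [heatKernel, sqrt_eq_rpow, ← rpow_neg (by positivity)]
  ring_nf

lemma heatKernel_eq_gaussianPDFReal {τ : ℝ} (hτ : 0 ≤ τ) :
    heatKernel τ = gaussianPDFReal 0 (2 * τ).toNNReal := by
  ext z
  rw [heatKernel_eq_inv_sqrt hτ, gaussianPDFReal_def, Real.coe_toNNReal _ (by positivity)]
  simp only [sub_zero]
  ring_nf

lemma heatKernel_pos {τ : ℝ} (hτ : 0 < τ) (z : ℝ) : 0 < heatKernel τ z := by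
  rw [heatKernel_eq_inv_sqrt hτ.le]
  positivity

lemma continuous_heatKernel (τ : ℝ) : Continuous (heatKernel τ) := by
  unfold heatKernel
  fun_prop

lemma integrable_heatKernel {τ : ℝ} (hτ : 0 ≤ τ) : Integrable (heatKernel τ) := by
  rw [heatKernel_eq_gaussianPDFReal hτ]
  exact integrable_gaussianPDFReal _ _

lemma integral_heatKernel {τ : ℝ} (hτ : 0 < τ) : ∫ z, heatKernel τ z = 1 := by
  rw [heatKernel_eq_gaussianPDFReal hτ.le]
  exact integral_gaussianPDFReal_eq_one _ (Real.toNNReal_pos.2 (by positivity)).ne'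

lemma integrable_heatKernel_sub {τ : ℝ} (hτ : 0 ≤ τ) (x : ℝ) :
    Integrable fun y => heatKernel τ (x - y) :=
  (integrable_heatKernel hτ).comp_sub_left x

lemma integral_heatKernel_sub {τ : ℝ} (hτ : 0 < τ) (x : ℝ) :
    ∫ y, heatKernel τ (x - y) = 1 := by
  rw [integral_sub_left_eq_self (heatKernel τ), integral_heatKernel hτ]

lemma heatKernel_le_two_mul {τ τ' : ℝ} (hτ : 0 < τ) (h : τ ≤ τ') (h' : τ' ≤ 4 * τ) (z : ℝ) :
    heatKernel τ z ≤ 2 * heatKernel τ' z := by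
  have hτ' : 0 < τ' := hτ.trans_le h
  rw [heatKernel_eq_inv_sqrt hτ.le, heatKernel_eq_inv_sqrt hτ'.le, ← mul_assoc]
  gcongr ?_ * exp ?_
  · have : √(4 * π * τ') ≤ √(4 * π * τ) * 2 := by
      rw [sqrt_le_iff, mul_pow, sq_sqrt (by positivity)]
      exact ⟨by positivity, by nlinarith [pi_pos]⟩
    calc (√(4 * π * τ))⁻¹ ≤ (√(4 * π * τ') / 2)⁻¹ :=
          inv_anti₀ (by positivity) (by rwa [div_le_iff₀ two_pos])
      _ = 2 * (√(4 * π * τ'))⁻¹ := by rw [inv_div, div_eq_mul_inv]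
  · rw [neg_div, neg_div, neg_le_neg_iff]
    gcongr

lemma hasDerivAt_heatKernel {τ : ℝ} (hτ : 0 < τ) (z : ℝ) :
    HasDerivAt (heatKernel · z) (heatKernel τ z * (z ^ 2 / (4 * τ ^ 2) - 1 / (2 * τ))) τ := by
  have hfactor : HasDerivAt (fun τ => (4 * π * τ) ^ (-(1:ℝ)/2))
      (4 * π * ((-(1:ℝ)/2) * (4 * π * τ) ^ (-(1:ℝ)/2 - 1))) τ :=
    ((hasDerivAt_id τ).const_mul (4 * π)).rpow_const (Or.inl (by positivity))
      |>.congr_deriv (by simp only [mul_one, id_eq]; ring)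
  have hexponent : HasDerivAt (fun τ => -(z ^ 2) / (4 * τ)) (z ^ 2 / (4 * τ ^ 2)) τ :=
    ((hasDerivAt_const τ (-(z ^ 2))).div ((hasDerivAt_id' τ).const_mul 4) (by positivity))
      |>.congr_deriv (by field_simp; ring)
  refine (hfactor.mul hexponent.exp).congr_deriv ?_
  rw [heatKernel, rpow_sub (by positivity), rpow_one]
  field_simp
  ring

lemma abs_heatKernel_sub_le {τ₁ τ₂ : ℝ} (h₁ : 0 < τ₁) (h₁₂ : τ₁ ≤ τ₂) (h₂₁ : τ₂ ≤ 2 * τ₁)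
    (z : ℝ) :
    |heatKernel τ₂ z - heatKernel τ₁ z|
      ≤ 2 * (τ₂ - τ₁) * heatKernel τ₂ z * (1 / τ₂ + z ^ 2 / τ₂ ^ 2) := by
  have hderiv_le : ∀ τ ∈ Ico τ₁ τ₂,
      ‖heatKernel τ z * (z ^ 2 / (4 * τ ^ 2) - 1 / (2 * τ))‖
        ≤ 2 * heatKernel τ₂ z * (1 / τ₂ + z ^ 2 / τ₂ ^ 2) := by
    rintro τ ⟨hτ₁, hτ₂⟩
    have hτ : 0 < τ := h₁.trans_le hτ₁
    have hτ₂' : 0 < τ₂ := hτ.trans hτ₂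
    have hfactor : |z ^ 2 / (4 * τ ^ 2) - 1 / (2 * τ)| ≤ 1 / τ₂ + z ^ 2 / τ₂ ^ 2 := by
      refine (abs_sub _ _).trans ?_
      rw [abs_of_nonneg (by positivity), abs_of_nonneg (by positivity), add_comm]
      gcongr ?_ + ?_
      · exact div_le_div_of_nonneg_left zero_le_one hτ₂' (by linarith)
      · exact div_le_div_of_nonneg_left (sq_nonneg z) (by positivity) (by nlinarith)
    rw [norm_mul, Real.norm_of_nonneg (heatKernel_pos hτ z).le, Real.norm_eq_abs]
    exact mul_le_mul (heatKernel_le_two_mul hτ hτ₂.le (by linarith) z) hfactor (abs_nonneg _)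
      (mul_pos two_pos (heatKernel_pos hτ₂' z)).le
  have hmvt := norm_image_sub_le_of_norm_deriv_le_segment'
    (fun τ hτ => (hasDerivAt_heatKernel (h₁.trans_le hτ.1) z).hasDerivWithinAt) hderiv_le τ₂
    (right_mem_Icc.2 h₁₂)
  rw [Real.norm_eq_abs] at hmvt
  linarith

lemma integrable_abs_rpow_mul_exp_neg_mul_sq {b s : ℝ} (hb : 0 < b) (hs : -1 < s) :
    Integrable fun x : ℝ => |x| ^ s * exp (-b * x ^ 2) := by
  have h := integrable_rpow_mul_exp_neg_mul_sq hb hs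
  refine (h.norm.add h.comp_neg.norm).mono' (by fun_prop) (ae_of_all _ fun x => ?_)
  rw [Real.norm_of_nonneg (by positivity)]
  simp only [Pi.add_apply, norm_mul, Real.norm_of_nonneg (exp_pos _).le, neg_sq]
  rcases le_total 0 x with hx | hx
  · rw [abs_of_nonneg hx, Real.norm_of_nonneg (rpow_nonneg hx _)]
    have := mul_nonneg (norm_nonneg ((-x) ^ s)) (exp_pos (-b * x ^ 2)).le
    linarith
  · rw [abs_of_nonpos hx, Real.norm_of_nonneg (rpow_nonneg (neg_nonneg.2 hx) _)]
    have := mul_nonneg (norm_nonneg (x ^ s)) (exp_pos (-b * x ^ 2)).le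
    linarith

noncomputable def heatMoment (α : ℝ) : ℝ := ∫ z, heatKernel 1 z * |z| ^ α

lemma heatMoment_nonneg (α : ℝ) : 0 ≤ heatMoment α :=
  integral_nonneg fun z => mul_nonneg (heatKernel_pos one_pos z).le (by positivity)

lemma integrable_heatKernel_mul_abs_rpow {τ α : ℝ} (hτ : 0 < τ) (hα : -1 < α) :
    Integrable fun z => heatKernel τ z * |z| ^ α := by
  refine ((integrable_abs_rpow_mul_exp_neg_mul_sq (b := (4 * τ)⁻¹) (by positivity) hα).const_mul
    (√(4 * π * τ))⁻¹).congr (ae_of_all _ fun z => ?_)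
  dsimp only
  rw [heatKernel_eq_inv_sqrt hτ.le]
  field_simp

lemma heatKernel_eq_inv_sqrt_mul_heatKernel_one {τ : ℝ} (hτ : 0 < τ) (z : ℝ) :
    heatKernel τ z = (√τ)⁻¹ * heatKernel 1 ((√τ)⁻¹ * z) := by
  rw [heatKernel_eq_inv_sqrt hτ.le, heatKernel_eq_inv_sqrt zero_le_one, mul_one,
    sqrt_mul (by positivity), mul_pow, inv_pow, sq_sqrt hτ.le]
  field_simp

lemma integral_heatKernel_mul_abs_rpow {τ : ℝ} (hτ : 0 < τ) (α : ℝ) :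
    ∫ z, heatKernel τ z * |z| ^ α = τ ^ (α / 2) * heatMoment α := by
  have hr : 0 < √τ := sqrt_pos.2 hτ
  have hscale : ∀ z, heatKernel τ z * |z| ^ α
      = (√τ) ^ α * (√τ)⁻¹ * (heatKernel 1 ((√τ)⁻¹ * z) * |(√τ)⁻¹ * z| ^ α) := by
    intro z
    rw [heatKernel_eq_inv_sqrt_mul_heatKernel_one hτ, abs_mul, abs_inv, abs_of_pos hr,
      mul_rpow (by positivity) (abs_nonneg _), inv_rpow hr.le]
    field_simp
  simp_rw [hscale]
  rw [integral_const_mul, Measure.integral_comp_inv_mul_left (fun w => heatKernel 1 w * |w| ^ α),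
    abs_of_pos hr, smul_eq_mul, heatMoment, sqrt_eq_rpow, ← rpow_mul hτ.le]
  field_simp

lemma abs_rpow_add_two {γ : ℝ} (hγ : -1 < γ) (z : ℝ) : |z| ^ (γ + 2) = |z| ^ γ * z ^ 2 := by
  rw [rpow_add' (abs_nonneg z) (by linarith), rpow_two, sq_abs]

lemma integral_abs_heatKernel_sub_mul_abs_rpow_le_add {τ₁ τ₂ γ : ℝ} (h₁ : 0 < τ₁)
    (h₂ : 0 < τ₂) (hγ : -1 < γ) :
    ∫ z, |heatKernel τ₁ z - heatKernel τ₂ z| * |z| ^ γ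
      ≤ (τ₁ ^ (γ / 2) + τ₂ ^ (γ / 2)) * heatMoment γ := by
  have hint₁ := integrable_heatKernel_mul_abs_rpow h₁ hγ
  have hint₂ := integrable_heatKernel_mul_abs_rpow h₂ hγ
  calc ∫ z, |heatKernel τ₁ z - heatKernel τ₂ z| * |z| ^ γ
      ≤ ∫ z, (heatKernel τ₁ z * |z| ^ γ + heatKernel τ₂ z * |z| ^ γ) := by
        refine integral_mono_of_nonneg (ae_of_all _ fun z => by positivity) (hint₁.add hint₂)
          (ae_of_all _ fun z => ?_)
        have := abs_sub (heatKernel τ₁ z) (heatKernel τ₂ z)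
        rw [abs_of_pos (heatKernel_pos h₁ z), abs_of_pos (heatKernel_pos h₂ z)] at this
        dsimp only
        rw [← add_mul]
        exact mul_le_mul_of_nonneg_right this (by positivity)
    _ = (τ₁ ^ (γ / 2) + τ₂ ^ (γ / 2)) * heatMoment γ := by
        rw [integral_add hint₁ hint₂, integral_heatKernel_mul_abs_rpow h₁,
          integral_heatKernel_mul_abs_rpow h₂, add_mul]

lemma integral_abs_heatKernel_sub_mul_abs_rpow_le_of_le_two_mul {τ₁ τ₂ γ : ℝ} (h₁ : 0 < τ₁)
    (h₁₂ : τ₁ ≤ τ₂) (h₂₁ : τ₂ ≤ 2 * τ₁) (hγ : -1 < γ) :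
    ∫ z, |heatKernel τ₁ z - heatKernel τ₂ z| * |z| ^ γ
      ≤ 2 * (heatMoment γ + heatMoment (γ + 2)) * τ₂ ^ (γ / 2) * ((τ₂ - τ₁) / τ₂) := by
  have h₂ : 0 < τ₂ := h₁.trans_le h₁₂
  have hint₁ := (integrable_heatKernel_mul_abs_rpow h₂ hγ).const_mul τ₂⁻¹
  have hint₂ := (integrable_heatKernel_mul_abs_rpow h₂ (by linarith : -1 < γ + 2)).const_mul
    (τ₂ ^ 2)⁻¹
  calc ∫ z, |heatKernel τ₁ z - heatKernel τ₂ z| * |z| ^ γ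
      ≤ ∫ z, 2 * (τ₂ - τ₁) * (τ₂⁻¹ * (heatKernel τ₂ z * |z| ^ γ)
          + (τ₂ ^ 2)⁻¹ * (heatKernel τ₂ z * |z| ^ (γ + 2))) := by
        refine integral_mono_of_nonneg (ae_of_all _ fun z => by positivity)
          ((hint₁.add hint₂).const_mul _) (ae_of_all _ fun z => ?_)
        have := mul_le_mul_of_nonneg_right (abs_heatKernel_sub_le h₁ h₁₂ h₂₁ z)
          (by positivity : 0 ≤ |z| ^ γ)
        dsimp only
        rw [abs_sub_comm, abs_rpow_add_two hγ]
        refine this.trans_eq ?_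
        ring
    _ = 2 * (heatMoment γ + heatMoment (γ + 2)) * τ₂ ^ (γ / 2) * ((τ₂ - τ₁) / τ₂) := by
        rw [integral_const_mul, integral_add hint₁ hint₂, integral_const_mul, integral_const_mul,
          integral_heatKernel_mul_abs_rpow h₂, integral_heatKernel_mul_abs_rpow h₂,
          show (γ + 2) / 2 = γ / 2 + 1 by ring, rpow_add_one h₂.ne']
        field_simp

theorem integral_abs_heatKernel_sub_mul_abs_rpow_le {τ₁ τ₂ γ : ℝ} (h₁ : 0 < τ₁)
    (h₁₂ : τ₁ ≤ τ₂) (hγ₀ : 0 < γ) (hγ₁ : γ ≤ 1) :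
    ∫ z, |heatKernel τ₁ z - heatKernel τ₂ z| * |z| ^ γ
      ≤ 2 * (2 * heatMoment γ + heatMoment (γ + 2)) * τ₂ ^ (-(γ / 2)) * (τ₂ - τ₁) ^ γ := by
  have h₂ : 0 < τ₂ := h₁.trans_le h₁₂
  set r := (τ₂ - τ₁) / τ₂ with hr
  have hr₀ : 0 ≤ r := div_nonneg (by linarith) h₂.le
  have hrγ : r ≤ r ^ γ := self_le_rpow_of_le_one hr₀ ((div_le_one h₂).2 (by linarith)) hγ₁
  have hm := heatMoment_nonneg γ
  have hm₂ := heatMoment_nonneg (γ + 2)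
  have hτγ : 0 < τ₂ ^ (γ / 2) := rpow_pos_of_pos h₂ _
  have hscale : τ₂ ^ (-(γ / 2)) * (τ₂ - τ₁) ^ γ = τ₂ ^ (γ / 2) * r ^ γ := by
    rw [hr, div_rpow (by linarith) h₂.le, rpow_neg h₂.le,
      show τ₂ ^ γ = τ₂ ^ (γ / 2) * τ₂ ^ (γ / 2) by rw [← rpow_add h₂, add_halves]]
    field_simp
  rw [mul_assoc, hscale]
  rcases le_or_gt τ₂ (2 * τ₁) with h | h
  · calc ∫ z, |heatKernel τ₁ z - heatKernel τ₂ z| * |z| ^ γ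
        ≤ 2 * (heatMoment γ + heatMoment (γ + 2)) * τ₂ ^ (γ / 2) * r :=
          integral_abs_heatKernel_sub_mul_abs_rpow_le_of_le_two_mul h₁ h₁₂ h (by linarith)
      _ ≤ 2 * (2 * heatMoment γ + heatMoment (γ + 2)) * (τ₂ ^ (γ / 2) * r ^ γ) := by
          nlinarith [mul_le_mul_of_nonneg_left hrγ
              (by positivity : 0 ≤ (heatMoment γ + heatMoment (γ + 2)) * τ₂ ^ (γ / 2)),
            mul_nonneg hm (mul_nonneg hτγ.le (hr₀.trans hrγ))]
  · have hr_half : 1 ≤ 2 * r ^ γ := by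
      have : 1 / 2 ≤ r := by rw [hr, le_div_iff₀ h₂]; linarith
      linarith
    calc ∫ z, |heatKernel τ₁ z - heatKernel τ₂ z| * |z| ^ γ
        ≤ (τ₁ ^ (γ / 2) + τ₂ ^ (γ / 2)) * heatMoment γ :=
          integral_abs_heatKernel_sub_mul_abs_rpow_le_add h₁ h₂ (by linarith)
      _ ≤ 2 * τ₂ ^ (γ / 2) * heatMoment γ := by
          have : τ₁ ^ (γ / 2) ≤ τ₂ ^ (γ / 2) := rpow_le_rpow h₁.le h₁₂ (by positivity)
          nlinarith
      _ ≤ 2 * (2 * heatMoment γ + heatMoment (γ + 2)) * (τ₂ ^ (γ / 2) * r ^ γ) := by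
          nlinarith [mul_le_mul_of_nonneg_left hr_half
              (by positivity : 0 ≤ τ₂ ^ (γ / 2) * heatMoment γ),
            mul_nonneg hm₂ (mul_nonneg hτγ.le (hr₀.trans hrγ))]

section SpatialHolder

variable {g : ℝ → ℝ} {L γ : ℝ}

lemma continuous_of_abs_sub_le_mul_rpow (hγ : 0 < γ)
    (hg : ∀ y y', |g y - g y'| ≤ L * |y - y'| ^ γ) : Continuous g := by
  refine continuous_iff_continuousAt.2 fun y₀ => tendsto_iff_norm_sub_tendsto_zero.2 ?_
  refine squeeze_zero (fun _ => norm_nonneg _) (fun y => hg y y₀) ?_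
  have : Filter.Tendsto (fun y => L * |y - y₀| ^ γ) (nhds y₀) (nhds (L * |y₀ - y₀| ^ γ)) :=
    ((continuous_abs.comp (continuous_sub_right y₀)).rpow_const fun _ => Or.inr hγ.le).const_mul L
      |>.tendsto y₀
  simpa [zero_rpow hγ.ne'] using this

lemma integrable_heatKernel_mul {τ : ℝ} (hτ : 0 < τ) (hγ : 0 < γ)
    (hg : ∀ y y', |g y - g y'| ≤ L * |y - y'| ^ γ) (x : ℝ) :
    Integrable fun y => heatKernel τ (x - y) * g y := by
  have hbound : Integrable fun y =>
      L * (heatKernel τ (x - y) * |x - y| ^ γ) + |g x| * heatKernel τ (x - y) :=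
    (((integrable_heatKernel_mul_abs_rpow hτ (by linarith)).comp_sub_left x).const_mul L).add
      ((integrable_heatKernel_sub hτ.le x).const_mul _)
  refine hbound.mono' (((continuous_heatKernel τ).comp (continuous_sub_left x)).mul
    (continuous_of_abs_sub_le_mul_rpow hγ hg)).aestronglyMeasurable (ae_of_all _ fun y => ?_)
  have hgy : |g y| ≤ L * |x - y| ^ γ + |g x| := by
    have := hg y x
    rw [abs_sub_comm y x] at this
    linarith [abs_sub_abs_le_abs_sub (g y) (g x)]
  rw [norm_mul, Real.norm_of_nonneg (heatKernel_pos hτ _).le, Real.norm_eq_abs]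
  have := mul_le_mul_of_nonneg_left hgy (heatKernel_pos hτ (x - y)).le
  linarith

lemma abs_integral_heatKernel_mul_sub_le {τ ε : ℝ} (hτ : 0 < τ) {h : ℝ → ℝ} (x : ℝ)
    (hgi : Integrable fun y => heatKernel τ (x - y) * g y)
    (hhi : Integrable fun y => heatKernel τ (x - y) * h y) (hgh : ∀ y, |g y - h y| ≤ ε) :
    |(∫ y, heatKernel τ (x - y) * g y) - ∫ y, heatKernel τ (x - y) * h y| ≤ ε := by
  have hle := norm_integral_le_of_norm_le ((integrable_heatKernel_sub hτ.le x).mul_const ε)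
    (ae_of_all _ fun y => show ‖heatKernel τ (x - y) * g y - heatKernel τ (x - y) * h y‖ ≤ _ by
      rw [← mul_sub, norm_mul, Real.norm_of_nonneg (heatKernel_pos hτ _).le, Real.norm_eq_abs]
      exact mul_le_mul_of_nonneg_left (hgh y) (heatKernel_pos hτ _).le)
  rwa [integral_sub hgi hhi, integral_mul_const, integral_heatKernel_sub hτ, one_mul,
    Real.norm_eq_abs] at hle

lemma abs_integral_heatKernel_sub_heatKernel_mul_le {τ₁ τ₂ : ℝ} (h₁ : 0 < τ₁) (h₂ : 0 < τ₂)
    (hγ : 0 < γ) (hg : ∀ y y', |g y - g y'| ≤ L * |y - y'| ^ γ) (x : ℝ) :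
    |(∫ y, heatKernel τ₁ (x - y) * g y) - ∫ y, heatKernel τ₂ (x - y) * g y|
      ≤ L * ∫ z, |heatKernel τ₁ z - heatKernel τ₂ z| * |z| ^ γ := by
  have hint : ∀ τ, 0 < τ → Integrable fun y => heatKernel τ (x - y) * (g y - g x) :=
    fun τ hτ => ((integrable_heatKernel_mul hτ hγ hg x).sub
      ((integrable_heatKernel_sub hτ.le x).mul_const (g x))).congr
      (ae_of_all _ fun y => by simp only [Pi.sub_apply]; ring)
  have hcenter : ∀ τ, 0 < τ → ∫ y, heatKernel τ (x - y) * g y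
      = (∫ y, heatKernel τ (x - y) * (g y - g x)) + g x := by
    intro τ hτ
    simp_rw [mul_sub]
    rw [integral_sub (integrable_heatKernel_mul hτ hγ hg x)
      ((integrable_heatKernel_sub hτ.le x).mul_const (g x)), integral_mul_const,
      integral_heatKernel_sub hτ]
    ring
  have hbound : Integrable fun z => |heatKernel τ₁ z - heatKernel τ₂ z| * |z| ^ γ :=
    ((integrable_heatKernel_mul_abs_rpow h₁ (by linarith)).sub
      (integrable_heatKernel_mul_abs_rpow h₂ (by linarith))).abs.congr
      (ae_of_all _ fun z => by
        simp only [Pi.sub_apply]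
        rw [← sub_mul, abs_mul, abs_of_nonneg (by positivity : 0 ≤ |z| ^ γ)])
  calc |(∫ y, heatKernel τ₁ (x - y) * g y) - ∫ y, heatKernel τ₂ (x - y) * g y|
      = ‖∫ y, (heatKernel τ₁ (x - y) - heatKernel τ₂ (x - y)) * (g y - g x)‖ := by
        rw [hcenter τ₁ h₁, hcenter τ₂ h₂, add_sub_add_right_eq_sub,
          ← integral_sub (hint τ₁ h₁) (hint τ₂ h₂), Real.norm_eq_abs]
        simp_rw [sub_mul]
    _ ≤ ∫ y, L * (|heatKernel τ₁ (x - y) - heatKernel τ₂ (x - y)| * |x - y| ^ γ) := by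
        refine norm_integral_le_of_norm_le ((hbound.comp_sub_left x).const_mul L)
          (ae_of_all _ fun y => ?_)
        rw [norm_mul, Real.norm_eq_abs, Real.norm_eq_abs, abs_sub_comm (g y), mul_left_comm]
        exact mul_le_mul_of_nonneg_left (hg x y) (abs_nonneg _)
    _ = L * ∫ z, |heatKernel τ₁ z - heatKernel τ₂ z| * |z| ^ γ := by
        rw [integral_const_mul,
          integral_sub_left_eq_self (fun z => |heatKernel τ₁ z - heatKernel τ₂ z| * |z| ^ γ)]

lemma abs_integral_heatKernel_mul_sub_le_of_holder {τ₁ τ₂ ε : ℝ} {h : ℝ → ℝ} (h₁ : 0 < τ₁)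
    (h₁₂ : τ₁ ≤ τ₂) (hγ₀ : 0 < γ) (hγ₁ : γ ≤ 1) (hL : 0 ≤ L)
    (hg : ∀ y y', |g y - g y'| ≤ L * |y - y'| ^ γ) (hh : ∀ y y', |h y - h y'| ≤ L * |y - y'| ^ γ)
    (hgh : ∀ y, |g y - h y| ≤ ε) (x : ℝ) :
    |(∫ y, heatKernel τ₁ (x - y) * g y) - ∫ y, heatKernel τ₂ (x - y) * h y|
      ≤ ε + L * (2 * (2 * heatMoment γ + heatMoment (γ + 2)) * τ₂ ^ (-(γ / 2))
        * (τ₂ - τ₁) ^ γ) := by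
  have h₂ : 0 < τ₂ := h₁.trans_le h₁₂
  calc |(∫ y, heatKernel τ₁ (x - y) * g y) - ∫ y, heatKernel τ₂ (x - y) * h y|
      ≤ |(∫ y, heatKernel τ₁ (x - y) * g y) - ∫ y, heatKernel τ₁ (x - y) * h y|
        + |(∫ y, heatKernel τ₁ (x - y) * h y) - ∫ y, heatKernel τ₂ (x - y) * h y| :=
        abs_sub_le _ _ _
    _ ≤ _ := add_le_add
        (abs_integral_heatKernel_mul_sub_le h₁ x (integrable_heatKernel_mul h₁ hγ₀ hg x)
          (integrable_heatKernel_mul h₁ hγ₀ hh x) hgh)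
        ((abs_integral_heatKernel_sub_heatKernel_mul_le h₁ h₂ hγ₀ hh x).trans
          (mul_le_mul_of_nonneg_left (integral_abs_heatKernel_sub_mul_abs_rpow_le h₁ h₁₂ hγ₀ hγ₁)
            hL))

end SpatialHolder

theorem heat_convolution_time_increment_bound_general
    (σ : ℝ → ℝ → ℝ) (γ L : ℝ) (hγ : γ ∈ Ioc (0:ℝ) 1) (hL : 0 < L)
    (hHolder : ∀ t₁ t₂ x₁ x₂ : ℝ, 0 ≤ t₁ → 0 ≤ t₂ →
      |σ t₁ x₁ - σ t₂ x₂| ≤ L * (|t₁ - t₂| ^ γ + |x₁ - x₂| ^ γ))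
    (t x : ℝ) (ht : 0 < t) :
    ∃ C > 0, ∀ u s : ℝ, 0 ≤ u → u < s → s < t →
      |(∫ y, heatKernel (t - s) (x - y) * σ s y)
          - (∫ y, heatKernel (t - u) (x - y) * σ u y)|
        ≤ C * (t - u) ^ (-(γ / 2)) * (s - u) ^ γ := by
  obtain ⟨hγ₀, hγ₁⟩ := hγ
  set K := 2 * (2 * heatMoment γ + heatMoment (γ + 2))
  have hK : 0 ≤ K := by
    have := heatMoment_nonneg γ
    have := heatMoment_nonneg (γ + 2)
    positivity
  have hspace : ∀ r, 0 ≤ r → ∀ y y', |σ r y - σ r y'| ≤ L * |y - y'| ^ γ :=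
    fun r hr y y' => by simpa [zero_rpow hγ₀.ne'] using hHolder r r y y' hr hr
  refine ⟨L * (t ^ (γ / 2) + K), by positivity, fun u s hu hus hst => ?_⟩
  have hs : 0 ≤ s := hu.trans hus.le
  have htu : 0 < t - u := by linarith
  have htime : ∀ y, |σ s y - σ u y| ≤ L * (s - u) ^ γ := fun y => by
    simpa [zero_rpow hγ₀.ne', abs_of_pos (sub_pos.2 hus)] using hHolder s u y y hs hu
  have hincrement := abs_integral_heatKernel_mul_sub_le_of_holder (by linarith)
    (by linarith : t - s ≤ t - u) hγ₀ hγ₁ hL.le (hspace s hs) (hspace u hu) htime x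
  rw [show t - u - (t - s) = s - u by ring] at hincrement
  have hone : 1 ≤ t ^ (γ / 2) * (t - u) ^ (-(γ / 2)) := by
    rw [rpow_neg htu.le, ← div_eq_mul_inv, one_le_div (rpow_pos_of_pos htu _)]
    exact rpow_le_rpow htu.le (by linarith) (by positivity)
  nlinarith [mul_le_mul_of_nonneg_left hone (by positivity : 0 ≤ L * (s - u) ^ γ)]

/-- Hölder-type estimate in time for `f(s) = ∫ ρ(t-s, x-y) σ(s,y) dy`. -/
theorem heat_convolution_time_increment_bound
    (σ : ℝ → ℝ → ℝ) (γ L M : ℝ) (hγ : γ ∈ Ioc (0:ℝ) 1) (hL : 0 < L)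
    (hbdd : ∀ s y, 0 ≤ s → |σ s y| ≤ M)
    (hHolder : ∀ t₁ t₂ x₁ x₂ : ℝ, 0 ≤ t₁ → 0 ≤ t₂ →
      |σ t₁ x₁ - σ t₂ x₂| ≤ L * (|t₁ - t₂| ^ γ + |x₁ - x₂| ^ γ))
    (t x : ℝ) (ht : 0 < t) :
    ∃ C > 0, ∀ u s : ℝ, 0 ≤ u → u < s → s < t →
      |(∫ y, heatKernel (t - s) (x - y) * σ s y)
          - (∫ y, heatKernel (t - u) (x - y) * σ u y)|
        ≤ C * (t - u) ^ (-(γ / 2)) * (s - u) ^ γ :=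
  heat_convolution_time_increment_bound_general σ γ L hγ hL hHolder t x ht
end

section
/- Let t > 0, 0 < β < γ ≤ 1 with γ/2 < 1, and let f: [0,t] → ℝ be a bounded measurable function such that |f(s) − f(u)| ≤ C₀ (t − u)^{−γ/2} (s − u)^γ for all 0 ≤ u < s < t. Then the Riemann–Liouville fractional derivative D^β_{0+}f, defined by (D^β_{0+}f)(s) = (1/Γ(1−β)) ( f(s)/s^β + β ∫_0^s (f(s) − f(u))/(s − u)^{1+β} du ) for s ∈ (0,t), is integrable on [0,t]: ∫_0^t |(D^β_{0+}f)(s)| ds < ∞. -/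
open MeasureTheory Set

/-- The left-sided Riemann–Liouville fractional derivative
`(D^β_{0+} f)(s) = (1/Γ(1-β)) ( f(s)/s^β + β ∫_0^s (f(s)-f(u))/(s-u)^{1+β} du )`. -/
noncomputable def fracDerivLeft (β : ℝ) (f : ℝ → ℝ) (s : ℝ) : ℝ :=
  (Real.Gamma (1 - β))⁻¹ *
    (f s / s ^ β + β * ∫ u in Ioo 0 s, (f s - f u) / (s - u) ^ (1 + β))

/-- If `f` is bounded, measurable and satisfies
`|f(s)-f(u)| ≤ C₀ (t-u)^{-γ/2} (s-u)^γ`, then `D^β_{0+} f` is integrable on `[0,t]`. -/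
theorem fracDerivLeft_integrable
    (t β γ C₀ : ℝ) (ht : 0 < t) (hβ : 0 < β) (hβγ : β < γ) (hγ : γ ≤ 1)
    (hγ2 : γ / 2 < 1)
    (f : ℝ → ℝ) (hmeas : Measurable f) (M : ℝ) (hbdd : ∀ s ∈ Icc 0 t, |f s| ≤ M)
    (hHolder : ∀ u s : ℝ, 0 ≤ u → u < s → s < t →
      |f s - f u| ≤ C₀ * (t - u) ^ (-(γ / 2)) * (s - u) ^ γ) :
    ∫⁻ s in Ioo 0 t, ENNReal.ofReal |fracDerivLeft β f s| < ⊤ := by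
  have hβ1 : β < 1 := lt_of_lt_of_le hβγ hγ
  have hΓ : 0 < Real.Gamma (1 - β) := Real.Gamma_pos_of_pos (by linarith)
  have hγ0 : 0 < γ := lt_trans hβ hβγ
  have hC₀ : 0 ≤ C₀ := by
    have h1 := (abs_nonneg (f (t/2) - f 0)).trans
      (hHolder 0 (t/2) le_rfl (by linarith) (by linarith))
    have hA : (0:ℝ) < (t - 0) ^ (-(γ/2)) := Real.rpow_pos_of_pos (by linarith) _
    have hB : (0:ℝ) < (t/2 - 0) ^ γ := Real.rpow_pos_of_pos (by linarith) _
    nlinarith [mul_pos hA hB]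
  have hM : 0 ≤ M := (abs_nonneg (f 0)).trans (hbdd 0 ⟨le_rfl, le_of_lt ht⟩)
  set K : ℝ := C₀ * t ^ (γ - β) / (γ - β) with hK
  have hKnn : 0 ≤ K :=
    div_nonneg (mul_nonneg hC₀ (Real.rpow_nonneg ht.le _)) (by linarith)
  set g : ℝ → ℝ := fun s =>
    (Real.Gamma (1 - β))⁻¹ * (M * s ^ (-β) + β * (K * (t - s) ^ (-(γ/2)))) with hg
  have key : ∀ s ∈ Ioo (0:ℝ) t, |fracDerivLeft β f s| ≤ g s := by
    intro s hs
    obtain ⟨hs0, hst⟩ := hs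
    have hsβ : (0:ℝ) < s ^ β := Real.rpow_pos_of_pos hs0 β
    have h1 : |f s / s ^ β| ≤ M * s ^ (-β) := by
      rw [abs_div, abs_of_pos hsβ, Real.rpow_neg hs0.le, div_eq_mul_inv]
      exact mul_le_mul_of_nonneg_right (hbdd s ⟨hs0.le, hst.le⟩) (by positivity)
    set p : ℝ := γ - (1 + β) with hp
    have hp1 : (-1:ℝ) < p := by rw [hp]; linarith
    have hAint : IntervalIntegrable (fun u => (s - u) ^ p) volume 0 s := by
      simpa using
        (intervalIntegral.intervalIntegrable_rpow' (a := s) (b := 0) hp1).comp_sub_left s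
    have hint : IntegrableOn (fun u => C₀ * (t - s) ^ (-(γ/2)) * (s - u) ^ p) (Ioo 0 s) := by
      rw [← intervalIntegrable_iff_integrableOn_Ioo_of_le hs0.le]
      exact hAint.const_mul _
    have hbound : ∀ u ∈ Ioo (0:ℝ) s,
        |(f s - f u) / (s - u) ^ (1 + β)| ≤ C₀ * (t - s) ^ (-(γ/2)) * (s - u) ^ p := by
      intro u hu
      obtain ⟨hu0, hus⟩ := hu
      have hsu : (0:ℝ) < s - u := by linarith
      have hsupow : (0:ℝ) < (s - u) ^ (1 + β) := Real.rpow_pos_of_pos hsu _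
      rw [abs_div, abs_of_pos hsupow, div_le_iff₀ hsupow]
      have hmono : (t - u) ^ (-(γ/2)) ≤ (t - s) ^ (-(γ/2)) :=
        Real.rpow_le_rpow_of_nonpos (by linarith) (by linarith) (by linarith)
      have hsplit : (s - u) ^ γ = (s - u) ^ p * (s - u) ^ (1 + β) := by
        rw [← Real.rpow_add hsu, show p + (1 + β) = γ by rw [hp]; ring]
      calc |f s - f u| ≤ C₀ * (t - u) ^ (-(γ/2)) * (s - u) ^ γ :=
            hHolder u s hu0.le hus hst
        _ ≤ C₀ * (t - s) ^ (-(γ/2)) * (s - u) ^ γ := by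
            exact mul_le_mul_of_nonneg_right
              (mul_le_mul_of_nonneg_left hmono hC₀) (Real.rpow_nonneg hsu.le _)
        _ = C₀ * (t - s) ^ (-(γ/2)) * (s - u) ^ p * (s - u) ^ (1 + β) := by
            rw [hsplit]; ring
    have hcalcA : ∫ u in Ioo 0 s, (s - u) ^ p = s ^ (γ - β) / (γ - β) := by
      rw [← integral_Ioc_eq_integral_Ioo, ← intervalIntegral.integral_of_le hs0.le,
        intervalIntegral.integral_comp_sub_left (fun x => x ^ p) s]
      simp only [sub_self, sub_zero]
      rw [integral_rpow (Or.inl hp1), show p + 1 = γ - β by rw [hp]; ring,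
        Real.zero_rpow (show γ - β ≠ 0 by intro h; linarith), sub_zero]
    have h2 : |∫ u in Ioo 0 s, (f s - f u) / (s - u) ^ (1 + β)|
        ≤ K * (t - s) ^ (-(γ/2)) := by
      have hle := norm_integral_le_of_norm_le
        (f := fun u => (f s - f u) / (s - u) ^ (1 + β)) hint (by
        filter_upwards [ae_restrict_mem measurableSet_Ioo] with u hu
        rw [Real.norm_eq_abs]; exact hbound u hu)
      rw [Real.norm_eq_abs] at hle
      have hcalc : ∫ u in Ioo 0 s, C₀ * (t - s) ^ (-(γ/2)) * (s - u) ^ p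
          = C₀ * (t - s) ^ (-(γ/2)) * (s ^ (γ - β) / (γ - β)) := by
        rw [MeasureTheory.integral_const_mul, hcalcA]
      rw [hcalc] at hle
      refine hle.trans ?_
      have hstpow : s ^ (γ - β) ≤ t ^ (γ - β) :=
        Real.rpow_le_rpow hs0.le hst.le (by linarith)
      have hApos : (0:ℝ) ≤ (t - s) ^ (-(γ/2)) := Real.rpow_nonneg (by linarith) _
      calc C₀ * (t - s) ^ (-(γ/2)) * (s ^ (γ - β) / (γ - β))
          ≤ C₀ * (t - s) ^ (-(γ/2)) * (t ^ (γ - β) / (γ - β)) := by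
            apply mul_le_mul_of_nonneg_left _ (mul_nonneg hC₀ hApos)
            gcongr
        _ = K * (t - s) ^ (-(γ/2)) := by rw [hK]; ring
    rw [fracDerivLeft, abs_mul, abs_inv, abs_of_pos hΓ]
    apply mul_le_mul_of_nonneg_left _ (inv_nonneg.mpr hΓ.le)
    calc |f s / s ^ β + β * ∫ u in Ioo 0 s, (f s - f u) / (s - u) ^ (1 + β)|
        ≤ |f s / s ^ β| + |β * ∫ u in Ioo 0 s, (f s - f u) / (s - u) ^ (1 + β)| :=
          abs_add_le _ _
      _ ≤ M * s ^ (-β) + β * (K * (t - s) ^ (-(γ/2))) := by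
          apply add_le_add h1
          rw [abs_mul, abs_of_pos hβ]
          exact mul_le_mul_of_nonneg_left h2 hβ.le
  have hg_int : IntegrableOn g (Ioo 0 t) := by
    rw [← intervalIntegrable_iff_integrableOn_Ioo_of_le ht.le]
    have hA : IntervalIntegrable (fun s => M * s ^ (-β)) volume 0 t :=
      (intervalIntegral.intervalIntegrable_rpow' (by linarith)).const_mul M
    have hB : IntervalIntegrable (fun s => (t - s) ^ (-(γ/2))) volume 0 t := by
      simpa using
        (intervalIntegral.intervalIntegrable_rpow' (a := t) (b := 0)
          (show (-1:ℝ) < -(γ/2) by linarith)).comp_sub_left t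
    exact ((hA.add ((hB.const_mul K).const_mul β)).const_mul _)
  calc ∫⁻ s in Ioo 0 t, ENNReal.ofReal |fracDerivLeft β f s|
      ≤ ∫⁻ s in Ioo 0 t, ENNReal.ofReal (g s) := by
        apply lintegral_mono_ae
        filter_upwards [ae_restrict_mem measurableSet_Ioo] with s hs
        exact ENNReal.ofReal_le_ofReal (key s hs)
    _ < ⊤ := hg_int.lintegral_lt_top
end

section
/- Let ρ(t,x) = (4πt)^{−1/2} exp(−x²/(4t)), γ ∈ (0,1], and let σ: [0,∞) × ℝ → ℝ be bounded and jointly Hölder continuous of order γ with constant L. Fix t > 0 and x ∈ ℝ and define τ(s) = ∫_ℝ ρ(1,z) (σ(s, x + z√(t − s)) − σ(s, x)) dz for s ∈ [0,t). Then there exists a constant C depending only on L and γ such that for all 0 ≤ s₂ < s₁ < t, |τ(s₁) − τ(s₂)| ≤ C (s₁ − s₂)^γ (t − s₂)^{−γ/2}. -/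
open MeasureTheory Set

private lemma continuous_of_holder {f : ℝ → ℝ} {L γ : ℝ} (hγ : 0 < γ)
    (h : ∀ a b : ℝ, |f a - f b| ≤ L * |a - b| ^ γ) : Continuous f := by
  rw [continuous_iff_continuousAt]
  intro y
  rw [ContinuousAt, ← tendsto_sub_nhds_zero_iff]
  have hb : Filter.Tendsto (fun a : ℝ => L * |a - y| ^ γ) (nhds y) (nhds 0) := by
    have hc : Continuous fun a : ℝ => L * |a - y| ^ γ :=
      continuous_const.mul ((continuous_abs.comp (continuous_id.sub continuous_const)).rpow_const
        fun _ => Or.inr hγ.le)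
    have := hc.tendsto y
    simpa [Real.zero_rpow hγ.ne'] using this
  exact squeeze_zero_norm (fun a => by simpa using h a y) hb

private lemma abs_rpow_le_one_add {z γ : ℝ} (hγ0 : 0 < γ) (hγ1 : γ ≤ 1) :
    |z| ^ γ ≤ 1 + |z| := by
  rcases le_or_gt |z| 1 with h | h
  · have : |z| ^ γ ≤ 1 := Real.rpow_le_one (abs_nonneg z) h hγ0.le
    linarith [abs_nonneg z]
  · have : |z| ^ γ ≤ |z| ^ (1:ℝ) := Real.rpow_le_rpow_of_exponent_le h.le hγ1
    rw [Real.rpow_one] at this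
    linarith

/-- The increment bound `|τ(s₁) - τ(s₂)| ≤ C (s₁-s₂)^γ (t-s₂)^{-γ/2}` for
`τ(s) = ∫ ρ(1,z) (σ(s, x+z√(t-s)) - σ(s,x)) dz`. -/
theorem tau_increment_bound
    (σ : ℝ → ℝ → ℝ) (γ L M : ℝ) (hγ : γ ∈ Ioc (0:ℝ) 1) (hL : 0 < L)
    (hbdd : ∀ s y, 0 ≤ s → |σ s y| ≤ M)
    (hHolder : ∀ t₁ t₂ x₁ x₂ : ℝ, 0 ≤ t₁ → 0 ≤ t₂ →
      |σ t₁ x₁ - σ t₂ x₂| ≤ L * (|t₁ - t₂| ^ γ + |x₁ - x₂| ^ γ))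
    (t x : ℝ) (ht : 0 < t) :
    ∃ C > 0, ∀ s₁ s₂ : ℝ, 0 ≤ s₂ → s₂ < s₁ → s₁ < t →
      |(∫ z, heatKernel 1 z * (σ s₁ (x + z * Real.sqrt (t - s₁)) - σ s₁ x))
          - (∫ z, heatKernel 1 z * (σ s₂ (x + z * Real.sqrt (t - s₂)) - σ s₂ x))|
        ≤ C * (s₁ - s₂) ^ γ * (t - s₂) ^ (-(γ / 2)) := by
  obtain ⟨hγ0, hγ1⟩ := hγ
  set c : ℝ := (4 * Real.pi * 1) ^ (-(1:ℝ)/2) with hc_def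
  have hc : 0 ≤ c := Real.rpow_nonneg (by positivity) _
  have hgfun : ∀ z : ℝ, heatKernel 1 z = c * Real.exp (-(1/4) * z ^ 2) := by
    intro z
    unfold heatKernel
    rw [hc_def]
    congr 1
    ring
  have hgnn : ∀ z : ℝ, 0 ≤ heatKernel 1 z := fun z => by
    rw [hgfun z]; positivity
  have hgeq : (fun z : ℝ => heatKernel 1 z) = fun z : ℝ => c * Real.exp (-(1/4) * z ^ 2) :=
    funext hgfun
  have hgcont : Continuous fun z : ℝ => heatKernel 1 z := by
    rw [hgeq]; continuity
  have hexp : Integrable (fun z : ℝ => Real.exp (-(1/4) * z ^ 2)) :=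
    integrable_exp_neg_mul_sq (by norm_num)
  have hg_int : Integrable (fun z : ℝ => heatKernel 1 z) := by
    rw [hgeq]; exact hexp.const_mul c
  -- integrability of the γ-moment
  have habs : Integrable (fun z : ℝ => |z| * Real.exp (-(1/4) * z ^ 2)) := by
    have := (integrable_mul_exp_neg_mul_sq (show (0:ℝ) < 1/4 by norm_num)).abs
    have heq : (fun z : ℝ => |z * Real.exp (-(1/4) * z ^ 2)|)
        = fun z : ℝ => |z| * Real.exp (-(1/4) * z ^ 2) := by
      funext z
      rw [abs_mul, abs_of_pos (Real.exp_pos _)]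
    rwa [heq] at this
  have hgabs_int : Integrable (fun z : ℝ => heatKernel 1 z * |z|) := by
    have := habs.const_mul c
    have heq : (fun z : ℝ => c * (|z| * Real.exp (-(1/4) * z ^ 2)))
        = fun z : ℝ => heatKernel 1 z * |z| := by
      funext z; rw [hgfun z]; ring
    rwa [heq] at this
  have hmom : Integrable (fun z : ℝ => heatKernel 1 z * |z| ^ γ) := by
    apply Integrable.mono' (hg_int.add hgabs_int)
    · exact (hgcont.mul ((continuous_abs).rpow_const
        fun _ => Or.inr hγ0.le)).aestronglyMeasurable
    · filter_upwards with z
      simp only [Pi.add_apply]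
      rw [Real.norm_eq_abs, abs_of_nonneg (mul_nonneg (hgnn z) (Real.rpow_nonneg (abs_nonneg z) _))]
      have h1 : |z| ^ γ ≤ 1 + |z| := abs_rpow_le_one_add hγ0 hγ1
      have := mul_le_mul_of_nonneg_left h1 (hgnn z)
      linarith [this]
  set A₀ : ℝ := ∫ z, heatKernel 1 z with hA₀
  set A₁ : ℝ := ∫ z, heatKernel 1 z * |z| ^ γ with hA₁
  have hA₀nn : 0 ≤ A₀ := integral_nonneg fun z => hgnn z
  have hA₁nn : 0 ≤ A₁ :=
    integral_nonneg fun z => mul_nonneg (hgnn z) (Real.rpow_nonneg (abs_nonneg z) _)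
  have hM : 0 ≤ M := le_trans (abs_nonneg _) (hbdd 0 0 le_rfl)
  refine ⟨2 * L * A₀ * t ^ (γ/2) + L * A₁ + 1, ?_, ?_⟩
  · have h1 : 0 ≤ 2 * L * A₀ * t ^ (γ/2) := by
      have : (0:ℝ) ≤ t ^ (γ/2) := Real.rpow_nonneg ht.le _
      have := mul_nonneg (mul_nonneg (by linarith : (0:ℝ) ≤ 2 * L) hA₀nn) this
      linarith
    have h2 : 0 ≤ L * A₁ := mul_nonneg hL.le hA₁nn
    linarith
  intro s₁ s₂ hs₂0 hs₂₁ hs₁t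
  have hs₁0 : 0 ≤ s₁ := le_of_lt (lt_of_le_of_lt hs₂0 hs₂₁)
  have ht₁ : 0 < t - s₁ := by linarith
  have ht₂ : 0 < t - s₂ := by linarith
  have hδ : 0 < s₁ - s₂ := by linarith
  set a₁ : ℝ := Real.sqrt (t - s₁) with ha₁def
  set a₂ : ℝ := Real.sqrt (t - s₂) with ha₂def
  have ha₁ : 0 < a₁ := Real.sqrt_pos.2 ht₁
  have ha₂ : 0 < a₂ := Real.sqrt_pos.2 ht₂
  have ha₁₂ : a₁ ≤ a₂ := Real.sqrt_le_sqrt (by linarith)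
  have hsq₁ : a₁ ^ 2 = t - s₁ := Real.sq_sqrt ht₁.le
  have hsq₂ : a₂ ^ 2 = t - s₂ := Real.sq_sqrt ht₂.le
  have hdiff : a₂ - a₁ ≤ (s₁ - s₂) / a₂ := by
    rw [le_div_iff₀ ha₂]
    nlinarith [ha₁.le]
  -- integrability of the two integrands
  have hσc : ∀ s : ℝ, 0 ≤ s → Continuous fun y => σ s y := by
    intro s hs
    apply continuous_of_holder hγ0 (L := L)
    intro a b
    have := hHolder s s a b hs hs
    simpa [Real.zero_rpow hγ0.ne'] using this
  have hint : ∀ s a : ℝ, 0 ≤ s →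
      Integrable (fun z : ℝ => heatKernel 1 z * (σ s (x + z * a) - σ s x)) := by
    intro s a hs
    apply Integrable.mono' (hg_int.mul_const (2 * M))
    · exact (hgcont.mul (((hσc s hs).comp
        (continuous_const.add (continuous_id.mul continuous_const))).sub
        continuous_const)).aestronglyMeasurable
    · filter_upwards with z
      rw [Real.norm_eq_abs, abs_mul, abs_of_nonneg (hgnn z)]
      have h1 : |σ s (x + z * a) - σ s x| ≤ 2 * M := by
        have := hbdd s (x + z * a) hs
        have := hbdd s x hs
        calc |σ s (x + z * a) - σ s x| ≤ |σ s (x + z * a)| + |σ s x| := abs_sub _ _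
          _ ≤ 2 * M := by linarith [hbdd s (x + z * a) hs, hbdd s x hs]
      exact mul_le_mul_of_nonneg_left h1 (hgnn z)
  have hf₁ := hint s₁ a₁ hs₁0
  have hf₂ := hint s₂ a₂ hs₂0
  set P : ℝ := (s₁ - s₂) ^ γ with hP_def
  set Q : ℝ := (t - s₂) ^ (-(γ/2)) with hQ_def
  have hP : 0 < P := Real.rpow_pos_of_pos hδ _
  have hQ : 0 < Q := Real.rpow_pos_of_pos ht₂ _
  -- key rpow computation : (a₂ - a₁)^γ ≤ P * Q
  have hkey : (a₂ - a₁) ^ γ ≤ P * Q := by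
    have h1 : (a₂ - a₁) ^ γ ≤ ((s₁ - s₂) / a₂) ^ γ :=
      Real.rpow_le_rpow (by linarith) hdiff hγ0.le
    have h2 : ((s₁ - s₂) / a₂) ^ γ = P / a₂ ^ γ := by
      rw [hP_def]; exact Real.div_rpow hδ.le ha₂.le γ
    have h3 : a₂ ^ γ = (t - s₂) ^ (γ/2) := by
      rw [ha₂def, Real.sqrt_eq_rpow, ← Real.rpow_mul ht₂.le]
      congr 1
      ring
    have h4 : P / (t - s₂) ^ (γ/2) = P * Q := by
      rw [hQ_def, Real.rpow_neg ht₂.le, div_eq_mul_inv]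
    rw [h2, h3, h4] at h1
    exact h1
  -- pointwise bound on the difference of the integrands
  have hpt : ∀ z : ℝ,
      |heatKernel 1 z * (σ s₁ (x + z * a₁) - σ s₁ x)
        - heatKernel 1 z * (σ s₂ (x + z * a₂) - σ s₂ x)|
      ≤ heatKernel 1 z * (2 * L * P) + heatKernel 1 z * |z| ^ γ * (L * (P * Q)) := by
    intro z
    have e1 : heatKernel 1 z * (σ s₁ (x + z * a₁) - σ s₁ x)
        - heatKernel 1 z * (σ s₂ (x + z * a₂) - σ s₂ x)
        = heatKernel 1 z * ((σ s₁ (x + z * a₁) - σ s₂ (x + z * a₂)) - (σ s₁ x - σ s₂ x)) := by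
      ring
    rw [e1, abs_mul, abs_of_nonneg (hgnn z)]
    have hb1 : |σ s₁ (x + z * a₁) - σ s₂ (x + z * a₂)|
        ≤ L * (P + |z| ^ γ * (P * Q)) := by
      have := hHolder s₁ s₂ (x + z * a₁) (x + z * a₂) hs₁0 hs₂0
      have habsz : |x + z * a₁ - (x + z * a₂)| = |z| * (a₂ - a₁) := by
        have : x + z * a₁ - (x + z * a₂) = -(z * (a₂ - a₁)) := by ring
        rw [this, abs_neg, abs_mul, abs_of_nonneg (by linarith : (0:ℝ) ≤ a₂ - a₁)]
      rw [habsz] at this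
      have hmulr : (|z| * (a₂ - a₁)) ^ γ = |z| ^ γ * (a₂ - a₁) ^ γ :=
        Real.mul_rpow (abs_nonneg z) (by linarith)
      rw [hmulr] at this
      have hs12 : |s₁ - s₂| = s₁ - s₂ := abs_of_pos hδ
      rw [hs12] at this
      have h5 : |z| ^ γ * (a₂ - a₁) ^ γ ≤ |z| ^ γ * (P * Q) :=
        mul_le_mul_of_nonneg_left hkey (Real.rpow_nonneg (abs_nonneg z) _)
      calc |σ s₁ (x + z * a₁) - σ s₂ (x + z * a₂)|
          ≤ L * ((s₁ - s₂) ^ γ + |z| ^ γ * (a₂ - a₁) ^ γ) := this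
        _ ≤ L * (P + |z| ^ γ * (P * Q)) := by
            apply mul_le_mul_of_nonneg_left _ hL.le
            rw [hP_def]
            linarith
    have hb2 : |σ s₁ x - σ s₂ x| ≤ L * P := by
      have := hHolder s₁ s₂ x x hs₁0 hs₂0
      simpa [abs_of_pos hδ, Real.zero_rpow hγ0.ne', hP_def] using this
    have hb3 : |(σ s₁ (x + z * a₁) - σ s₂ (x + z * a₂)) - (σ s₁ x - σ s₂ x)|
        ≤ L * (P + |z| ^ γ * (P * Q)) + L * P := by
      calc |(σ s₁ (x + z * a₁) - σ s₂ (x + z * a₂)) - (σ s₁ x - σ s₂ x)|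
          ≤ |σ s₁ (x + z * a₁) - σ s₂ (x + z * a₂)| + |σ s₁ x - σ s₂ x| := abs_sub _ _
        _ ≤ L * (P + |z| ^ γ * (P * Q)) + L * P := add_le_add hb1 hb2
    have := mul_le_mul_of_nonneg_left hb3 (hgnn z)
    calc heatKernel 1 z * |(σ s₁ (x + z * a₁) - σ s₂ (x + z * a₂)) - (σ s₁ x - σ s₂ x)|
        ≤ heatKernel 1 z * (L * (P + |z| ^ γ * (P * Q)) + L * P) := this
      _ = heatKernel 1 z * (2 * L * P) + heatKernel 1 z * |z| ^ γ * (L * (P * Q)) := by ring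
  -- the majorant is integrable
  have hmaj_int : Integrable (fun z : ℝ =>
      heatKernel 1 z * (2 * L * P) + heatKernel 1 z * |z| ^ γ * (L * (P * Q))) :=
    (hg_int.mul_const _).add (hmom.mul_const _)
  have hmaj_integral : (∫ z, (heatKernel 1 z * (2 * L * P)
        + heatKernel 1 z * |z| ^ γ * (L * (P * Q))))
      = A₀ * (2 * L * P) + A₁ * (L * (P * Q)) := by
    rw [integral_add (hg_int.mul_const _) (hmom.mul_const _),
      integral_mul_const, integral_mul_const]
  have step1 : |(∫ z, heatKernel 1 z * (σ s₁ (x + z * a₁) - σ s₁ x))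
        - ∫ z, heatKernel 1 z * (σ s₂ (x + z * a₂) - σ s₂ x)|
      ≤ A₀ * (2 * L * P) + A₁ * (L * (P * Q)) := by
    rw [← integral_sub hf₁ hf₂]
    calc |∫ z, (heatKernel 1 z * (σ s₁ (x + z * a₁) - σ s₁ x)
          - heatKernel 1 z * (σ s₂ (x + z * a₂) - σ s₂ x))|
        ≤ ∫ z, |heatKernel 1 z * (σ s₁ (x + z * a₁) - σ s₁ x)
          - heatKernel 1 z * (σ s₂ (x + z * a₂) - σ s₂ x)| := by
          simpa [Real.norm_eq_abs] using
            norm_integral_le_integral_norm (fun z : ℝ =>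
              heatKernel 1 z * (σ s₁ (x + z * a₁) - σ s₁ x)
                - heatKernel 1 z * (σ s₂ (x + z * a₂) - σ s₂ x))
      _ ≤ ∫ z, (heatKernel 1 z * (2 * L * P) + heatKernel 1 z * |z| ^ γ * (L * (P * Q))) :=
          integral_mono (hf₁.sub hf₂).abs hmaj_int hpt
      _ = A₀ * (2 * L * P) + A₁ * (L * (P * Q)) := hmaj_integral
  -- final arithmetic
  have hTQ : 1 ≤ t ^ (γ/2) * Q := by
    have h6 : (t - s₂) ^ (γ/2) ≤ t ^ (γ/2) :=
      Real.rpow_le_rpow ht₂.le (by linarith) (by positivity)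
    have h7 : (t - s₂) ^ (γ/2) * Q = 1 := by
      rw [hQ_def, Real.rpow_neg ht₂.le]
      exact mul_inv_cancel₀ (ne_of_gt (Real.rpow_pos_of_pos ht₂ _))
    calc (1:ℝ) = (t - s₂) ^ (γ/2) * Q := h7.symm
      _ ≤ t ^ (γ/2) * Q := mul_le_mul_of_nonneg_right h6 hQ.le
  refine le_trans step1 ?_
  have hfin : A₀ * (2 * L * P) ≤ 2 * L * A₀ * t ^ (γ/2) * P * Q := by
    have h8 : 0 ≤ 2 * L * A₀ * P := by positivity
    have h9 := mul_le_mul_of_nonneg_left hTQ h8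
    calc A₀ * (2 * L * P) = 2 * L * A₀ * P * 1 := by ring
      _ ≤ 2 * L * A₀ * P * (t ^ (γ/2) * Q) := h9
      _ = 2 * L * A₀ * t ^ (γ/2) * P * Q := by ring
  have e2 : (2 * L * A₀ * t ^ (γ/2) + L * A₁ + 1) * P * Q
      = 2 * L * A₀ * t ^ (γ/2) * P * Q + A₁ * (L * (P * Q)) + P * Q := by ring
  rw [e2]
  linarith [hfin, mul_pos hP hQ]
end

section
/- Let ρ(t,x) = (4πt)^{−1/2} exp(−x²/(4t)), γ ∈ (1/2,1), and let σ: [0,∞) × ℝ → ℝ be bounded by M and jointly Hölder continuous of order γ with constant L. Fix t > 0 and x ∈ ℝ. Then there exists a constant C depending only on M, L, γ, and t such that for all real ξ with |ξ| ≥ t^{−1}, |∫_0^t (∫_ℝ ρ(t − s, x − y) σ(s, y) dy) e^{isξ} ds| ≤ C |ξ|^{−γ}. -/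
/-!
Substituting `y = x - √(t - s) w` turns the inner integral into the Gaussian average
`g s = ∫ ρ(1, w) σ(s, x - √(t - s) w) dw` (with `σ` extended to `s < 0` by `σ (max s 0)`).
It is bounded, and since `√(t - s + h) - √(t - s) ≤ h / √(t - s)`, Hölder continuity gives
`|g s - g (s - h)| ≲ h^γ (1 + (t - s)^{-γ/2})`, which is integrable over `s ∈ (0, t)` as `γ < 2`.
For the half period `h = π / |ξ|` the factor `e^{isξ}` changes sign under `s ↦ s + h`, so twice
the oscillatory integral is `∫₀ᵗ (g s - g (s - h)) e^{isξ} ds` plus two pieces of length `h`.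
This gives `O(h + h^γ)`, and `h ≤ π t^{1-γ} |ξ|^{-γ}` because `|ξ| ≥ 1/t`.
-/

open MeasureTheory Set

def JointHolder (L γ : ℝ) (u : ℝ → ℝ → ℝ) : Prop :=
  ∀ s₁ s₂ y₁ y₂, |u s₁ y₁ - u s₂ y₂| ≤ L * (|s₁ - s₂| ^ γ + |y₁ - y₂| ^ γ)

lemma JointHolder.continuous_uncurry {u : ℝ → ℝ → ℝ} {L γ : ℝ} (hHolder : JointHolder L γ u)
    (hγ : 0 < γ) :
    Continuous (Function.uncurry u) := by
  refine continuous_iff_continuousAt.2 fun p => tendsto_iff_dist_tendsto_zero.2 ?_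
  have hcont : Continuous fun q : ℝ × ℝ => L * (|q.1 - p.1| ^ γ + |q.2 - p.2| ^ γ) := by
    fun_prop (disch := exact hγ.le)
  refine squeeze_zero (fun q => dist_nonneg) (fun q => hHolder _ _ _ _) ?_
  simpa [Real.zero_rpow hγ.ne'] using hcont.tendsto p

lemma jointHolder_comp_max_zero {σ : ℝ → ℝ → ℝ} {L γ : ℝ} (hL : 0 ≤ L) (hγ : 0 ≤ γ)
    (hHolder : ∀ t₁ t₂ x₁ x₂ : ℝ, 0 ≤ t₁ → 0 ≤ t₂ →
      |σ t₁ x₁ - σ t₂ x₂| ≤ L * (|t₁ - t₂| ^ γ + |x₁ - x₂| ^ γ)) :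
    JointHolder L γ fun s y => σ (max s 0) y := fun s₁ s₂ y₁ y₂ => by
  refine (hHolder _ _ _ _ (le_max_right _ _) (le_max_right _ _)).trans ?_
  gcongr L * (?_ ^ γ + _)
  exact abs_max_sub_max_le_abs s₁ s₂ 0

lemma sqrt_add_sub_sqrt_le {a h : ℝ} (ha : 0 < a) (hh : 0 ≤ h) :
    √(a + h) - √a ≤ h / √a := by
  have hsa : 0 < √a := Real.sqrt_pos.2 ha
  have hle : √a ≤ √(a + h) := Real.sqrt_le_sqrt (by linarith)
  rw [le_div_iff₀ hsa]
  nlinarith [Real.sq_sqrt ha.le, Real.sq_sqrt (by linarith : 0 ≤ a + h)]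

lemma abs_rpow_le_one_add_abs {γ : ℝ} (hγ0 : 0 ≤ γ) (hγ1 : γ ≤ 1) (w : ℝ) :
    |w| ^ γ ≤ 1 + |w| := by
  rcases le_or_gt |w| 1 with hw | hw
  · linarith [Real.rpow_le_one (abs_nonneg w) hw hγ0, abs_nonneg w]
  · linarith [Real.rpow_le_self_of_one_le hw.le hγ1]

lemma inv_le_rpow_mul_rpow_neg_s10 {t r γ : ℝ} (ht : 0 < t) (htr : t⁻¹ ≤ r) (hγ : γ ≤ 1) :
    r⁻¹ ≤ t ^ (1 - γ) * r ^ (-γ) := by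
  have hr : 0 < r := (inv_pos.2 ht).trans_le htr
  calc r⁻¹ = r⁻¹ ^ (1 - γ) * r ^ (-γ) := by
        rw [Real.inv_rpow hr.le, ← Real.rpow_neg hr.le, ← Real.rpow_add hr, ← Real.rpow_neg_one]
        ring_nf
    _ ≤ t ^ (1 - γ) * r ^ (-γ) := by
        gcongr ?_ * _
        exact Real.rpow_le_rpow (by positivity) (inv_le_of_inv_le₀ ht htr) (by linarith)

lemma intervalIntegrable_sub_rpow {t r : ℝ} (hr : -1 < r) :
    IntervalIntegrable (fun s => (t - s) ^ r) volume 0 t := by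
  simpa using
    ((intervalIntegral.intervalIntegrable_rpow' hr (a := 0) (b := t)).comp_sub_left t).symm

lemma integral_sub_rpow {t r : ℝ} (hr : -1 < r) :
    ∫ s in (0:ℝ)..t, (t - s) ^ r = t ^ (r + 1) / (r + 1) := by
  rw [intervalIntegral.integral_comp_sub_left (fun u => u ^ r) t, sub_self, sub_zero,
    integral_rpow (Or.inl hr), Real.zero_rpow (by linarith), sub_zero]

lemma antiperiodic_exp_I_mul {ξ : ℝ} (hξ : ξ ≠ 0) :
    Function.Antiperiodic (fun s : ℝ => Complex.exp (Complex.I * s * ξ)) (Real.pi / |ξ|) := by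
  intro s
  have hξ' : (ξ : ℂ) ≠ 0 := by exact_mod_cast hξ
  rcases hξ.lt_or_gt with hneg | hpos
  · have : Complex.I * ↑(s + Real.pi / |ξ|) * ξ = Complex.I * s * ξ + -(Real.pi * Complex.I) := by
      rw [abs_of_neg hneg]; push_cast; field_simp
    simp only [this, Complex.exp_add, Complex.exp_neg_pi_mul_I, mul_neg_one]
  · have : Complex.I * ↑(s + Real.pi / |ξ|) * ξ = Complex.I * s * ξ + Real.pi * Complex.I := by
      rw [abs_of_pos hpos]; push_cast; field_simp
    simp only [this, Complex.exp_add, Complex.exp_pi_mul_I, mul_neg_one]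

/-- Shifting by an antiperiod `h` of `e` flips the sign of the integral, so twice the integral is
controlled by the increments `f s - f (s - h)` plus two boundary pieces of length `h`. -/
lemma norm_integral_mul_antiperiodic_le {f e : ℝ → ℂ} {B t h : ℝ} (hf : Continuous f)
    (he : Continuous e) (hanti : Function.Antiperiodic e h) (he1 : ∀ s, ‖e s‖ ≤ 1)
    (hB : ∀ s, ‖f s‖ ≤ B) (ht : 0 ≤ t) (hh : 0 ≤ h) :
    ‖∫ s in (0:ℝ)..t, f s * e s‖ ≤ B * h + (∫ s in (0:ℝ)..t, ‖f s - f (s - h)‖) / 2 := by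
  set F : ℝ → ℂ := fun s => f s * e s
  set G : ℝ → ℂ := fun s => f (s - h) * e s
  have hF : ∀ a b, IntervalIntegrable F volume a b := fun a b =>
    (hf.mul he).intervalIntegrable a b
  have hG : ∀ a b, IntervalIntegrable G volume a b := fun a b =>
    ((hf.comp (continuous_sub_right h)).mul he).intervalIntegrable a b
  have hGbound : ∀ s, ‖G s‖ ≤ B := fun s => by
    simpa [G, norm_mul] using mul_le_mul (hB (s - h)) (he1 s) (norm_nonneg _)
      ((norm_nonneg _).trans (hB 0))
  have hshift : ∫ s in h..(t + h), G s = -∫ s in (0:ℝ)..t, F s := by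
    have := intervalIntegral.integral_comp_add_right G h (a := 0) (b := t)
    rw [zero_add] at this
    rw [← this, ← intervalIntegral.integral_neg]
    simp only [G, F, add_sub_cancel_right, hanti _, mul_neg]
  have htwice : 2 * ∫ s in (0:ℝ)..t, F s =
      (∫ s in (0:ℝ)..t, F s - G s) + (∫ s in (0:ℝ)..h, G s) - ∫ s in t..(t + h), G s := by
    rw [intervalIntegral.integral_sub (hF 0 t) (hG 0 t)]
    linear_combination hshift - intervalIntegral.integral_add_adjacent_intervals (hG 0 h) (hG h t)
      + intervalIntegral.integral_add_adjacent_intervals (hG h t) (hG t (t + h))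
  have hdiff : ‖∫ s in (0:ℝ)..t, F s - G s‖ ≤ ∫ s in (0:ℝ)..t, ‖f s - f (s - h)‖ := by
    refine (intervalIntegral.norm_integral_le_integral_norm ht).trans
      (intervalIntegral.integral_mono_on ht ((hF 0 t).sub (hG 0 t)).norm
        ((hf.sub (hf.comp (continuous_sub_right h))).norm.intervalIntegrable 0 t) fun s _ => ?_)
    simpa [F, G, ← sub_mul, norm_mul] using
      mul_le_mul_of_nonneg_left (he1 s) (norm_nonneg (f s - f (s - h)))
  have hleft : ‖∫ s in (0:ℝ)..h, G s‖ ≤ B * h := by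
    simpa [abs_of_nonneg hh] using
      intervalIntegral.norm_integral_le_of_norm_le_const (a := 0) (b := h) fun s _ => hGbound s
  have hright : ‖∫ s in t..(t + h), G s‖ ≤ B * h := by
    simpa [abs_of_nonneg hh] using
      intervalIntegral.norm_integral_le_of_norm_le_const (a := t) (b := t + h) fun s _ => hGbound s
  have h2 : 2 * ‖∫ s in (0:ℝ)..t, F s‖ ≤
      (∫ s in (0:ℝ)..t, ‖f s - f (s - h)‖) + B * h + B * h := by
    calc 2 * ‖∫ s in (0:ℝ)..t, F s‖ = ‖2 * ∫ s in (0:ℝ)..t, F s‖ := by simp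
      _ ≤ _ := by rw [htwice]; exact (norm_sub_le_of_le (norm_add_le_of_le hdiff hleft) hright)
  linarith

lemma heatKernel_eq (t w : ℝ) :
    heatKernel t w = (4 * Real.pi * t) ^ (-(1:ℝ) / 2) * Real.exp (-(4 * t)⁻¹ * w ^ 2) := by
  rw [heatKernel]; ring_nf

lemma heatKernel_nonneg {t : ℝ} (ht : 0 ≤ t) (w : ℝ) : 0 ≤ heatKernel t w := by
  unfold heatKernel; positivity

lemma integrable_heatKernel_s10 {t : ℝ} (ht : 0 < t) : Integrable (heatKernel t) := by
  rw [show heatKernel t = _ from funext (heatKernel_eq t)]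
  exact (integrable_exp_neg_mul_sq (by positivity)).const_mul _

lemma integrable_heatKernel_mul_abs_rpow_s10 {t γ : ℝ} (ht : 0 < t) (hγ0 : 0 ≤ γ) (hγ1 : γ ≤ 1) :
    Integrable fun w => heatKernel t w * |w| ^ γ := by
  have hmoment : Integrable fun w => heatKernel t w * |w| := by
    simp_rw [heatKernel_eq, mul_assoc]
    refine Integrable.const_mul ?_ _
    simpa [abs_mul, mul_comm] using
      (integrable_mul_exp_neg_mul_sq (b := (4 * t)⁻¹) (by positivity)).abs
  refine ((integrable_heatKernel_s10 ht).add hmoment).mono' ?_ (ae_of_all _ fun w => ?_)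
  · exact (integrable_heatKernel_s10 ht).aestronglyMeasurable.mul (by fun_prop)
  · have hk := heatKernel_nonneg ht.le w
    rw [Pi.add_apply, Real.norm_eq_abs, abs_of_nonneg (by positivity)]
    nlinarith [abs_rpow_le_one_add_abs hγ0 hγ1 w, heatKernel_nonneg ht.le w]

lemma sqrt_mul_heatKernel_sqrt_mul {a : ℝ} (ha : 0 < a) (w : ℝ) :
    √a * heatKernel a (√a * w) = heatKernel 1 w := by
  have hexp : -((√a * w) ^ 2) / (4 * a) = -(w ^ 2) / (4 * 1) := by
    rw [mul_pow, Real.sq_sqrt ha.le]; field_simp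
  have hconst : √a * (4 * Real.pi * a) ^ (-(1:ℝ) / 2) = (4 * Real.pi * 1) ^ (-(1:ℝ) / 2) := by
    rw [Real.mul_rpow (by positivity) ha.le, Real.sqrt_eq_rpow, mul_one, mul_left_comm,
      ← Real.rpow_add ha]
    norm_num
  rw [heatKernel, heatKernel, hexp, ← mul_assoc, hconst]

lemma integral_heatKernel_mul_eq {a : ℝ} (ha : 0 < a) (x : ℝ) (f : ℝ → ℝ) :
    ∫ y, heatKernel a (x - y) * f y = ∫ w, heatKernel 1 w * f (x - √a * w) := by
  have hsa : 0 < √a := Real.sqrt_pos.2 ha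
  let G : ℝ → ℝ := fun u => heatKernel a u * f (x - u)
  calc ∫ y, heatKernel a (x - y) * f y = ∫ u, G u := by
        rw [← integral_sub_left_eq_self _ volume x]; simp [G]
    _ = ∫ w, √a * G (√a * w) := by
        rw [integral_const_mul, Measure.integral_comp_mul_left G √a, abs_of_pos (inv_pos.2 hsa),
          smul_eq_mul, mul_inv_cancel_left₀ hsa.ne']
    _ = ∫ w, heatKernel 1 w * f (x - √a * w) := by
        simp only [G, ← mul_assoc, sqrt_mul_heatKernel_sqrt_mul ha]

/-- For `φ = heatKernel 1` this is, by `integral_heatKernel_mul_eq`, the heat semigroup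
`P_{t-s}` applied to `u s` at `y`, written so that it makes sense for every `s`. -/
noncomputable def scaledAverage (φ : ℝ → ℝ) (u : ℝ → ℝ → ℝ) (t y s : ℝ) : ℝ :=
  ∫ w, φ w * u s (y - √(t - s) * w)

section ScaledAverage

variable {φ : ℝ → ℝ} {u : ℝ → ℝ → ℝ} {M L γ : ℝ}

lemma integrable_mul_comp (hφ : Integrable φ) (hu : Continuous (Function.uncurry u))
    (hM : ∀ s y, |u s y| ≤ M) (s a y : ℝ) :
    Integrable fun w => φ w * u s (y - a * w) :=
  hφ.mul_bdd (hu.comp (by fun_prop : Continuous fun w => (s, y - a * w))).aestronglyMeasurable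
    (ae_of_all _ fun w => hM _ _)

lemma abs_integral_mul_comp_sub_le (hφ : Integrable φ) (hφ0 : ∀ w, 0 ≤ φ w)
    (hφγ : Integrable fun w => φ w * |w| ^ γ) (hu : Continuous (Function.uncurry u))
    (hM : ∀ s y, |u s y| ≤ M)
    (hHolder : JointHolder L γ u)
    (y s₁ s₂ a₁ a₂ : ℝ) :
    |(∫ w, φ w * u s₁ (y - a₁ * w)) - ∫ w, φ w * u s₂ (y - a₂ * w)| ≤
      L * (|s₁ - s₂| ^ γ * (∫ w, φ w) + |a₁ - a₂| ^ γ * ∫ w, φ w * |w| ^ γ) := by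
  have hbound : ∀ w, ‖φ w * u s₁ (y - a₁ * w) - φ w * u s₂ (y - a₂ * w)‖ ≤
      L * (|s₁ - s₂| ^ γ * φ w + |a₁ - a₂| ^ γ * (φ w * |w| ^ γ)) := fun w => by
    have hy : |y - a₁ * w - (y - a₂ * w)| ^ γ = |a₁ - a₂| ^ γ * |w| ^ γ := by
      rw [show y - a₁ * w - (y - a₂ * w) = -((a₁ - a₂) * w) by ring, abs_neg, abs_mul,
        Real.mul_rpow (abs_nonneg _) (abs_nonneg _)]
    rw [Real.norm_eq_abs, ← mul_sub, abs_mul, abs_of_nonneg (hφ0 w)]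
    calc φ w * |u s₁ (y - a₁ * w) - u s₂ (y - a₂ * w)|
        ≤ φ w * (L * (|s₁ - s₂| ^ γ + |a₁ - a₂| ^ γ * |w| ^ γ)) := by
          rw [← hy]; exact mul_le_mul_of_nonneg_left (hHolder _ _ _ _) (hφ0 w)
      _ = _ := by ring
  rw [← integral_sub (integrable_mul_comp hφ hu hM _ _ _) (integrable_mul_comp hφ hu hM _ _ _),
    ← Real.norm_eq_abs]
  refine (norm_integral_le_of_norm_le
    (((hφ.const_mul _).add (hφγ.const_mul _)).const_mul L) (ae_of_all _ hbound)).trans_eq ?_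
  simp only [Pi.add_apply]
  rw [integral_const_mul, integral_add (hφ.const_mul _) (hφγ.const_mul _), integral_const_mul,
    integral_const_mul]

lemma abs_scaledAverage_le (hφ : Integrable φ) (hφ0 : ∀ w, 0 ≤ φ w) (hM : ∀ s y, |u s y| ≤ M)
    (t y s : ℝ) : |scaledAverage φ u t y s| ≤ M * ∫ w, φ w := by
  rw [← integral_const_mul, ← Real.norm_eq_abs]
  refine norm_integral_le_of_norm_le (hφ.const_mul M) (ae_of_all _ fun w => ?_)
  rw [Real.norm_eq_abs, abs_mul, abs_of_nonneg (hφ0 w), mul_comm]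
  exact mul_le_mul_of_nonneg_right (hM _ _) (hφ0 w)

lemma continuous_scaledAverage (hφ : Integrable φ) (hu : Continuous (Function.uncurry u))
    (hM : ∀ s y, |u s y| ≤ M) (t y : ℝ) : Continuous (scaledAverage φ u t y) := by
  refine continuous_of_dominated
    (fun s => (integrable_mul_comp hφ hu hM s _ y).aestronglyMeasurable)
    (fun s => ae_of_all _ fun w => ?_) (hφ.norm.mul_const M) (ae_of_all _ fun w => ?_)
  · rw [norm_mul, Real.norm_eq_abs (u _ _)]
    exact mul_le_mul_of_nonneg_left (hM _ _) (norm_nonneg _)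
  · exact continuous_const.mul (hu.comp (f := fun s => (s, y - √(t - s) * w)) (by fun_prop))

lemma abs_scaledAverage_sub_le (hφ : Integrable φ) (hφ0 : ∀ w, 0 ≤ φ w)
    (hφγ : Integrable fun w => φ w * |w| ^ γ) (hu : Continuous (Function.uncurry u))
    (hM : ∀ s y, |u s y| ≤ M) (hL : 0 ≤ L) (hγ : 0 ≤ γ)
    (hHolder : JointHolder L γ u)
    {t y s h : ℝ} (hs : s < t) (hh : 0 ≤ h) :
    |scaledAverage φ u t y s - scaledAverage φ u t y (s - h)| ≤
      L * h ^ γ * ((∫ w, φ w) + (t - s) ^ (-(γ / 2)) * ∫ w, φ w * |w| ^ γ) := by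
  have hts : 0 < t - s := sub_pos.2 hs
  have hshift : |s - (s - h)| = h := by rw [sub_sub_cancel, abs_of_nonneg hh]
  have hsqrt : |√(t - s) - √(t - (s - h))| ≤ h / √(t - s) := by
    rw [abs_sub_comm, show t - (s - h) = t - s + h by ring,
      abs_of_nonneg (sub_nonneg.2 (Real.sqrt_le_sqrt (by linarith)))]
    exact sqrt_add_sub_sqrt_le hts hh
  have hm : 0 ≤ ∫ w, φ w * |w| ^ γ := integral_nonneg fun w => by have := hφ0 w; positivity
  refine (abs_integral_mul_comp_sub_le hφ hφ0 hφγ hu hM hHolder y _ _ _ _).trans ?_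
  calc L * (|s - (s - h)| ^ γ * (∫ w, φ w) + |√(t - s) - √(t - (s - h))| ^ γ * ∫ w, φ w * |w| ^ γ)
      ≤ L * (h ^ γ * (∫ w, φ w) + (h / √(t - s)) ^ γ * ∫ w, φ w * |w| ^ γ) := by
        rw [hshift]; gcongr
    _ = L * h ^ γ * ((∫ w, φ w) + (t - s) ^ (-(γ / 2)) * ∫ w, φ w * |w| ^ γ) := by
        rw [Real.div_rpow hh (Real.sqrt_nonneg _), Real.sqrt_eq_rpow, ← Real.rpow_mul hts.le,
          Real.rpow_neg hts.le]
        ring_nf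

lemma integral_abs_scaledAverage_sub_le (hφ : Integrable φ) (hφ0 : ∀ w, 0 ≤ φ w)
    (hφγ : Integrable fun w => φ w * |w| ^ γ) (hu : Continuous (Function.uncurry u))
    (hM : ∀ s y, |u s y| ≤ M) (hL : 0 ≤ L) (hγ0 : 0 ≤ γ) (hγ2 : γ < 2)
    (hHolder : JointHolder L γ u)
    {t y h : ℝ} (ht : 0 ≤ t) (hh : 0 ≤ h) :
    ∫ s in (0:ℝ)..t, |scaledAverage φ u t y s - scaledAverage φ u t y (s - h)| ≤
      L * h ^ γ * (t * (∫ w, φ w) + t ^ (1 - γ / 2) / (1 - γ / 2) * ∫ w, φ w * |w| ^ γ) := by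
  have hr : -1 < -(γ / 2) := by linarith
  have hcont := continuous_scaledAverage hφ hu hM t y
  calc ∫ s in (0:ℝ)..t, |scaledAverage φ u t y s - scaledAverage φ u t y (s - h)|
      ≤ ∫ s in (0:ℝ)..t, L * h ^ γ * ((∫ w, φ w) + (t - s) ^ (-(γ / 2)) * ∫ w, φ w * |w| ^ γ) := by
        refine intervalIntegral.integral_mono_on_of_le_Ioo ht ?_ ?_ fun s hs =>
          abs_scaledAverage_sub_le hφ hφ0 hφγ hu hM hL hγ0 hHolder hs.2 hh
        · exact (hcont.sub (hcont.comp (continuous_sub_right h))).abs.intervalIntegrable _ _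
        · exact (intervalIntegrable_const.add
            ((intervalIntegrable_sub_rpow hr).mul_const _)).const_mul _
    _ = _ := by
        rw [intervalIntegral.integral_const_mul,
          intervalIntegral.integral_add intervalIntegrable_const
            ((intervalIntegrable_sub_rpow hr).mul_const _), intervalIntegral.integral_mul_const,
          integral_sub_rpow hr, intervalIntegral.integral_const, smul_eq_mul, sub_zero]
        ring_nf

theorem exists_norm_integral_scaledAverage_mul_exp_le (hφ : Integrable φ) (hφ0 : ∀ w, 0 ≤ φ w)
    (hφγ : Integrable fun w => φ w * |w| ^ γ) (hu : Continuous (Function.uncurry u))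
    (hM : ∀ s y, |u s y| ≤ M) (hL : 0 ≤ L) (hγ0 : 0 ≤ γ) (hγ1 : γ ≤ 1)
    (hHolder : JointHolder L γ u)
    {t : ℝ} (ht : 0 < t) (y : ℝ) :
    ∃ C ≥ 0, ∀ ξ : ℝ, t⁻¹ ≤ |ξ| →
      ‖∫ s in (0:ℝ)..t, (scaledAverage φ u t y s : ℂ) * Complex.exp (Complex.I * s * ξ)‖ ≤
        C * |ξ| ^ (-γ) := by
  set g := scaledAverage φ u t y
  set B := M * ∫ w, φ w
  set A := L * (t * (∫ w, φ w) + t ^ (1 - γ / 2) / (1 - γ / 2) * ∫ w, φ w * |w| ^ γ)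
  have hB : 0 ≤ B := mul_nonneg ((abs_nonneg _).trans (hM 0 0)) (integral_nonneg hφ0)
  have hA : 0 ≤ A := by
    have hm : 0 ≤ ∫ w, φ w * |w| ^ γ := integral_nonneg fun w => by have := hφ0 w; positivity
    have hc₀ : 0 ≤ ∫ w, φ w := integral_nonneg hφ0
    have hγ2 : 0 < 1 - γ / 2 := by linarith
    positivity
  refine ⟨B * Real.pi * t ^ (1 - γ) + A * Real.pi ^ γ / 2, by positivity, fun ξ hξ => ?_⟩
  have hξ0 : 0 < |ξ| := (inv_pos.2 ht).trans_le hξ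
  set h := Real.pi / |ξ|
  have hh : 0 ≤ h := by positivity
  have hosc := norm_integral_mul_antiperiodic_le (f := fun s => (g s : ℂ)) (h := h)
    (Complex.continuous_ofReal.comp (continuous_scaledAverage hφ hu hM t y)) (by fun_prop)
    (antiperiodic_exp_I_mul (abs_pos.1 hξ0))
    (fun s => by rw [mul_assoc, ← Complex.ofReal_mul, Complex.norm_exp_I_mul_ofReal])
    (fun s => by rw [Complex.norm_real]; exact abs_scaledAverage_le hφ hφ0 hM t y s) ht.le hh
  have hincr : ∫ s in (0:ℝ)..t, |g s - g (s - h)| ≤ A * h ^ γ :=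
    (integral_abs_scaledAverage_sub_le hφ hφ0 hφγ hu hM hL hγ0 (by linarith) hHolder ht.le
      hh).trans_eq (by ring)
  have hh_le : h ≤ Real.pi * (t ^ (1 - γ) * |ξ| ^ (-γ)) := by
    rw [show h = Real.pi * |ξ|⁻¹ from div_eq_mul_inv _ _]
    gcongr
    exact inv_le_rpow_mul_rpow_neg_s10 ht hξ hγ1
  have hhγ : h ^ γ = Real.pi ^ γ * |ξ| ^ (-γ) := by
    rw [show h = Real.pi / |ξ| from rfl, Real.div_rpow Real.pi_pos.le hξ0.le,
      Real.rpow_neg hξ0.le, div_eq_mul_inv]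
  calc _ ≤ _ := hosc
    _ ≤ B * h + A * h ^ γ / 2 := by
      simp only [← Complex.ofReal_sub, Complex.norm_real, Real.norm_eq_abs]
      linarith
    _ ≤ B * (Real.pi * (t ^ (1 - γ) * |ξ| ^ (-γ))) + A * (Real.pi ^ γ * |ξ| ^ (-γ)) / 2 := by
      rw [← hhγ]; gcongr
    _ = _ := by ring

end ScaledAverage

lemma setIntegral_Ioo_heatKernel_conv_eq (σ : ℝ → ℝ → ℝ) {t : ℝ} (ht : 0 ≤ t) (x : ℝ)
    (e : ℝ → ℂ) :
    ∫ s in Ioo 0 t, ((∫ y, heatKernel (t - s) (x - y) * σ s y : ℝ) : ℂ) * e s =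
      ∫ s in (0:ℝ)..t,
        (scaledAverage (heatKernel 1) (fun s y => σ (max s 0) y) t x s : ℂ) * e s := by
  rw [intervalIntegral.integral_of_le ht, integral_Ioc_eq_integral_Ioo]
  refine setIntegral_congr_fun measurableSet_Ioo fun s hs => ?_
  simp only [scaledAverage, max_eq_left hs.1.le, integral_heatKernel_mul_eq (sub_pos.2 hs.2)]

/-- Fourier-type decay of `∫_0^t (∫ ρ(t-s,x-y) σ(s,y) dy) e^{isξ} ds`
for bounded, jointly γ-Hölder `σ` and `|ξ| ≥ t⁻¹`. -/
theorem heat_convolution_fourier_decay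
    (σ : ℝ → ℝ → ℝ) (γ L M : ℝ) (hγ : γ ∈ Ioo (1/2 : ℝ) 1) (hL : 0 < L)
    (hbdd : ∀ s y, 0 ≤ s → |σ s y| ≤ M)
    (hHolder : ∀ t₁ t₂ x₁ x₂ : ℝ, 0 ≤ t₁ → 0 ≤ t₂ →
      |σ t₁ x₁ - σ t₂ x₂| ≤ L * (|t₁ - t₂| ^ γ + |x₁ - x₂| ^ γ))
    (t x : ℝ) (ht : 0 < t) :
    ∃ C > 0, ∀ ξ : ℝ, t⁻¹ ≤ |ξ| →
      ‖∫ s in Ioo 0 t,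
          ((∫ y, heatKernel (t - s) (x - y) * σ s y : ℝ) : ℂ)
            * Complex.exp (Complex.I * s * ξ)‖
        ≤ C * |ξ| ^ (-γ) := by
  obtain ⟨hγ0, hγ1⟩ : 0 < γ ∧ γ < 1 := ⟨by linarith [hγ.1], hγ.2⟩
  have hu_holder := jointHolder_comp_max_zero hL.le hγ0.le hHolder
  obtain ⟨C, hC, hdecay⟩ := exists_norm_integral_scaledAverage_mul_exp_le
    (integrable_heatKernel_s10 one_pos) (heatKernel_nonneg zero_le_one)
    (integrable_heatKernel_mul_abs_rpow_s10 one_pos hγ0.le hγ1.le) (hu_holder.continuous_uncurry hγ0)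
    (fun s y => hbdd _ y (le_max_right s 0)) hL.le hγ0.le hγ1.le hu_holder ht x
  refine ⟨C + 1, by positivity, fun ξ hξ => ?_⟩
  rw [setIntegral_Ioo_heatKernel_conv_eq σ ht.le x]
  exact (hdecay ξ hξ).trans (by gcongr; linarith)
end
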